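/- arXiv:2212.09620 — 9 statements merged into one kernel-verified Lean document; each statement's English description precedes it below -/
import Mathlib

section
/- Let $X \subseteq \binom{[n]}{k}$ be a collection of $k$-subsets of $[n]$ with the quasi-exchange property (for all $x, y \in X$, if $i \in x \setminus y$ and $i > \max(y \setminus x)$, then there exists $j \in y \setminus x$ with $(x \setminus \{i\}) \cup \{j\} \in X$). Then any linear extension of the Gale (Bruhat) order on $X$ is a shelling order of the pure simplicial complex whose facets are the elements of $X$. -/
/-- Increasing enumeration of a finite set of naturals. -/
def sortedL (x : Finset ℕ) : List ℕ := x.sort (· ≤ ·)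

/-- The Gale (Bruhat) order on finite subsets of ℕ: componentwise comparison of
the increasing enumerations. -/
def GaleLE (x y : Finset ℕ) : Prop :=
  ∀ i (hx : i < (sortedL x).length) (hy : i < (sortedL y).length),
    (sortedL x).get ⟨i, hx⟩ ≤ (sortedL y).get ⟨i, hy⟩

def GaleLT (x y : Finset ℕ) : Prop := GaleLE x y ∧ x ≠ y

/-- The quasi-exchange property. -/
def QuasiExchange (X : Set (Finset ℕ)) : Prop :=
  ∀ x ∈ X, ∀ y ∈ X, ∀ i ∈ x \ y, (y \ x).Nonempty → (∀ m ∈ y \ x, m < i) →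
    ∃ j ∈ y \ x, (x \ {i}) ∪ {j} ∈ X

/-- `C` is a shelling order: for all `i < j` there is `z < j` with
`|C z ∩ C j| = k - 1` and `C i ∩ C j ⊆ C z ∩ C j`. -/
def IsShellingOrder (k : ℕ) {h : ℕ} (C : Fin h → Finset ℕ) : Prop :=
  ∀ i j : Fin h, i < j → ∃ z : Fin h, z < j ∧
    ((C z ∩ C j).card = k - 1 ∧ C i ∩ C j ⊆ C z ∩ C j)

/-!
Let `x` come before `y` in a linear extension, and let `a = max (x \ y)`, `b = max (y \ x)`.
If `a < b`, quasi-exchange applied to `y` swaps `b` for some `c ∈ x \ y`, `c < b`; the result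
`z` is Gale-below `y` (hence earlier), meets `y` in `k - 1` elements and contains `x ∩ y`.
If `b < a`, quasi-exchange applied to `x` swaps `a` for some `j ∈ y \ x`; the new set is
Gale-below `x`, so `y` is still not Gale-below it, it still contains `x ∩ y`, and it is one step
closer to `y`, so we conclude by induction on `|x \ y|`.
-/

open Finset

theorem Finset.lt_card_filter_le_iff_orderEmbOfFin_le {α : Type*} [LinearOrder α]
    (s : Finset α) (i : Fin #s) (t : α) :
    (i : ℕ) < #(s.filter (· ≤ t)) ↔ s.orderEmbOfFin rfl i ≤ t := by
  set f := s.orderEmbOfFin rfl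
  have hcard : #(s.filter (· ≤ t)) = #(univ.filter fun j => f j ≤ t) := by
    conv_lhs => rw [← s.map_orderEmbOfFin_univ rfl, filter_map, card_map]
    rfl
  rw [hcard]
  constructor
  · intro hi
    by_contra! hlt
    have hsub : (univ.filter fun j => f j ≤ t) ⊆ Iio i := fun j hj =>
      mem_Iio.2 (f.lt_iff_lt.1 ((mem_filter.1 hj).2.trans_lt hlt))
    exact (card_le_card hsub).not_gt (by rwa [Fin.card_Iio])
  · intro hle
    have hsub : Iic i ⊆ univ.filter fun j => f j ≤ t := fun j hj =>
      mem_filter.2 ⟨mem_univ _, (f.monotone (mem_Iic.1 hj)).trans hle⟩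
    have := card_le_card hsub
    rw [Fin.card_Iic] at this
    omega

theorem galeLE_of_card_filter_le {x y : Finset ℕ}
    (h : ∀ t, #(y.filter (· ≤ t)) ≤ #(x.filter (· ≤ t))) : GaleLE x y := by
  intro i hx hy
  have hx' : i < #x := by rwa [sortedL, length_sort] at hx
  have hy' : i < #y := by rwa [sortedL, length_sort] at hy
  have key := (x.lt_card_filter_le_iff_orderEmbOfFin_le ⟨i, hx'⟩ _).1
    (((y.lt_card_filter_le_iff_orderEmbOfFin_le ⟨i, hy'⟩ _).2 le_rfl).trans_le (h _))
  rw [orderEmbOfFin_apply, orderEmbOfFin_apply] at key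
  exact key

theorem galeLE_trans {x y z : Finset ℕ} (hxy : #x ≤ #y) (h₁ : GaleLE x y)
    (h₂ : GaleLE y z) : GaleLE x z := fun i hx hz =>
  have hy : i < (sortedL y).length := by
    rw [sortedL, length_sort] at hx ⊢; omega
  (h₁ i hx hy).trans (h₂ i hy hz)

section Exchange

variable {x y : Finset ℕ} {a b : ℕ}

theorem galeLT_insert_erase (hab : a ≤ b) (ha : a ∉ y) : GaleLT (insert a (y.erase b)) y := by
  refine ⟨galeLE_of_card_filter_le fun t => ?_, fun h => ha (h ▸ mem_insert_self a _)⟩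
  by_cases hb : b ∈ y.filter (· ≤ t)
  · have hpos := card_pos.2 ⟨b, hb⟩
    rw [filter_insert, if_pos (hab.trans (mem_filter.1 hb).2), filter_erase,
      card_insert_of_notMem fun h => ha (mem_filter.1 (mem_of_mem_erase h)).1,
      card_erase_of_mem hb]
    omega
  · calc #(y.filter (· ≤ t)) = #((y.erase b).filter (· ≤ t)) := by
          rw [filter_erase, erase_eq_of_notMem hb]
      _ ≤ _ := card_le_card (filter_subset_filter _ (subset_insert _ _))

theorem card_insert_erase_inter_self (hb : b ∈ y) (ha : a ∉ y) :
    #(insert a (y.erase b) ∩ y) = #y - 1 := by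
  rw [insert_inter_of_notMem ha, inter_eq_left.2 (erase_subset b y), card_erase_of_mem hb]

theorem inter_subset_insert_erase (hb : b ∉ y) : x ∩ y ⊆ insert a (x.erase b) := fun _ hu =>
  mem_insert_of_mem (mem_erase.2 ⟨fun h => hb (h ▸ (mem_inter.1 hu).2), (mem_inter.1 hu).1⟩)

theorem sdiff_nonempty_of_card_eq (hxy : #x = #y) (hne : x ≠ y) : (x \ y).Nonempty :=
  sdiff_nonempty.2 fun h => hne (eq_of_subset_of_card_le h hxy.ge)

theorem QuasiExchange.exists_insert_erase_mem {X : Set (Finset ℕ)} (hQE : QuasiExchange X)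
    (hx : x ∈ X) (hy : y ∈ X) (hb : b ∈ x \ y) (hyx : (y \ x).Nonempty)
    (hlt : ∀ m ∈ y \ x, m < b) : ∃ a ∈ y \ x, a < b ∧ insert a (x.erase b) ∈ X := by
  obtain ⟨a, ha, hmem⟩ := hQE x hx y hy b hb hyx hlt
  rw [sdiff_singleton_eq_erase, union_comm, ← insert_eq] at hmem
  exact ⟨a, ha, hlt a ha, hmem⟩

end Exchange

theorem exists_adjacent_galeLT_of_not_galeLE {X : Set (Finset ℕ)} {k : ℕ}
    (hcard : ∀ x ∈ X, #x = k) (hQE : QuasiExchange X) {x y : Finset ℕ} (hx : x ∈ X)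
    (hy : y ∈ X) (hyx : ¬ GaleLE y x) :
    ∃ z ∈ X, GaleLT z y ∧ #(z ∩ y) = k - 1 ∧ x ∩ y ⊆ z := by
  induction hd : #(x \ y) using Nat.strong_induction_on generalizing x with
  | _ d ih =>
  have hne : x ≠ y := by rintro rfl; exact hyx fun _ _ _ => le_rfl
  have hxk := hcard x hx
  have hyk := hcard y hy
  have hxy_ne := sdiff_nonempty_of_card_eq (hxk.trans hyk.symm) hne
  have hyx_ne := sdiff_nonempty_of_card_eq (hyk.trans hxk.symm) hne.symm
  have ha := max'_mem _ hxy_ne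
  have hb := max'_mem _ hyx_ne
  set a := (x \ y).max' hxy_ne
  set b := (y \ x).max' hyx_ne
  have hab : a ≠ b := fun h => (mem_sdiff.1 hb).2 (h ▸ (mem_sdiff.1 ha).1)
  rcases hab.lt_or_gt with hab | hba
  · obtain ⟨c, hc, hcb, hz⟩ := hQE.exists_insert_erase_mem hy hx hb hxy_ne
      fun m hm => (le_max' _ m hm).trans_lt hab
    refine ⟨_, hz, galeLT_insert_erase hcb.le (mem_sdiff.1 hc).2, ?_, ?_⟩
    · rw [card_insert_erase_inter_self (mem_sdiff.1 hb).1 (mem_sdiff.1 hc).2, hyk]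
    · rw [inter_comm]
      exact inter_subset_insert_erase (mem_sdiff.1 hb).2
  · obtain ⟨j, hj, hja, hx'⟩ := hQE.exists_insert_erase_mem hx hy ha hyx_ne
      fun m hm => (le_max' _ m hm).trans_lt hba
    have hle := (galeLT_insert_erase hja.le (mem_sdiff.1 hj).2).1
    have hyx' : ¬ GaleLE y (insert j (x.erase a)) := fun h =>
      hyx (galeLE_trans (by rw [hyk, hcard _ hx']) h hle)
    have hd' : #(insert j (x.erase a) \ y) < d := by
      rw [insert_sdiff_of_mem _ (mem_sdiff.1 hj).1, erase_sdiff_comm, card_erase_of_mem ha, ← hd]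
      exact Nat.sub_lt (card_pos.2 hxy_ne) one_pos
    obtain ⟨z, hz, hzy, hzcard, hsub⟩ := ih _ hd' hx' hyx' rfl
    exact ⟨z, hz, hzy, hzcard,
      (subset_inter (inter_subset_insert_erase (mem_sdiff.1 ha).2) inter_subset_right).trans hsub⟩

/-- Any linear extension of the Gale order on a collection of `k`-subsets of `[n]`
with the quasi-exchange property is a shelling order. -/
theorem quasiExchange_linear_extension_is_shelling
    (n k h : ℕ) (X : Set (Finset ℕ))
    (hX : ∀ x ∈ X, x ⊆ Finset.Icc 1 n ∧ x.card = k)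
    (hQE : QuasiExchange X)
    (L : Fin h → Finset ℕ)
    (hinj : Function.Injective L)
    (himg : ∀ x, x ∈ X ↔ ∃ i, L i = x)
    (hlin : ∀ i j : Fin h, GaleLT (L i) (L j) → i < j) :
    IsShellingOrder k L := by
  intro i j hij
  have hL : ∀ m, L m ∈ X := fun m => (himg _).2 ⟨m, rfl⟩
  have hji : ¬ GaleLE (L j) (L i) := fun hle => hij.not_gt (hlin j i ⟨hle, hinj.ne hij.ne'⟩)
  obtain ⟨z, hz, hzj, hzcard, hsub⟩ :=
    exists_adjacent_galeLT_of_not_galeLE (fun x hx => (hX x hx).2) hQE (hL i) (hL j) hji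
  obtain ⟨m, rfl⟩ := (himg z).1 hz
  exact ⟨m, hlin m j hzj, hzcard, subset_inter hsub inter_subset_right⟩
end

section
/- Every order ideal in the Gale order on $k$-subsets of $[n]$ has the quasi-exchange property. -/
open Finset

theorem List.Pairwise.getElem_le_iff_lt_countP {α : Type*} [LinearOrder α] {l : List α}
    (hl : l.Pairwise (· ≤ ·)) (t : α) {m : ℕ} (hm : m < l.length) :
    l[m] ≤ t ↔ m < l.countP (· ≤ t) := by
  induction l generalizing m with
  | nil => simp at hm
  | cons a l ih =>
    rw [List.pairwise_cons] at hl
    by_cases hat : a ≤ t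
    · cases m with
      | zero => simp [hat]
      | succ m => simpa [hat] using ih hl.2 (m := m) (by simpa using hm)
    · have hl0 : l.countP (· ≤ t) = 0 :=
        List.countP_eq_zero.mpr fun b hb hbt => hat ((hl.1 b hb).trans (by simpa using hbt))
      cases m with
      | zero => simp [hat, hl0]
      | succ m =>
        simpa [hat, hl0] using (not_le.mp hat).trans_le (hl.1 _ (List.getElem_mem _))

theorem sortedL_get_le_iff (s : Finset ℕ) (t : ℕ) {m : ℕ} (hm : m < (sortedL s).length) :
    (sortedL s).get ⟨m, hm⟩ ≤ t ↔ m < #(s.filter (· ≤ t)) := by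
  have hcount : (sortedL s).countP (· ≤ t) = #(s.filter (· ≤ t)) := by
    rw [sortedL, ← Multiset.coe_countP, sort_eq, Multiset.countP_eq_card_filter]
    rfl
  rw [← hcount]
  exact (pairwise_sort s _).getElem_le_iff_lt_countP t hm

theorem card_filter_le_le_card_filter_exchange {α : Type*} [Preorder α] [DecidableEq α]
    [DecidableLE α] {A : Finset α} {i j : α} (hj : j ∉ A) (hji : j ≤ i) (t : α) :
    #(A.filter (· ≤ t)) ≤ #((A \ {i} ∪ {j}).filter (· ≤ t)) := by
  refine card_le_card_of_injOn (fun a => if a = i then j else a) ?_ ?_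
  · intro a ha
    simp only [coe_filter, Set.mem_ofPred_eq] at ha ⊢
    grind [hji.trans]
  · intro a ha b hb hab
    simp only [coe_filter, Set.mem_ofPred_eq] at ha hb hab
    grind

theorem galeLE_exchange {A : Finset ℕ} {i j : ℕ} (hj : j ∉ A) (hji : j ≤ i) :
    GaleLE (A \ {i} ∪ {j}) A :=
  galeLE_of_card_filter_le (card_filter_le_le_card_filter_exchange hj hji)

theorem card_exchange {α : Type*} [DecidableEq α] {A : Finset α} {i j : α} (hi : i ∈ A)
    (hj : j ∉ A) : #(A \ {i} ∪ {j}) = #A := by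
  grind

/-- Every order ideal in the Gale order on `k`-subsets of `[n]` has the
quasi-exchange property. -/
theorem ideal_quasiExchange
    (n k : ℕ) (X : Set (Finset ℕ))
    (hX : ∀ x ∈ X, x ⊆ Finset.Icc 1 n ∧ x.card = k)
    (hideal : ∀ y ∈ X, ∀ x : Finset ℕ, x ⊆ Finset.Icc 1 n → x.card = k →
      GaleLE x y → x ∈ X) :
    QuasiExchange X := by
  intro x hx y hy i hi ⟨j, hj⟩ hlt
  obtain ⟨hix, -⟩ := mem_sdiff.mp hi
  obtain ⟨hjy, hjx⟩ := mem_sdiff.mp hj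
  obtain ⟨hxn, hxk⟩ := hX x hx
  have hsub : x \ {i} ∪ {j} ⊆ Icc 1 n :=
    union_subset (sdiff_subset.trans hxn) (singleton_subset_iff.mpr ((hX y hy).1 hjy))
  exact ⟨j, hj, hideal x hx _ hsub (by rw [card_exchange hix hjx, hxk])
    (galeLE_exchange hjx (hlt j hj).le)⟩
end

section
/- Let $C_1, \ldots, C_h$ ($h \geq 3$) be a shelling order of a pure $(k-1)$-dimensional simplicial complex with facets $k$-subsets of $[n]$. If $|C_{h-1} \cap C_h| < k - 1$, then $C_1, \ldots, C_{h-2}, C_h, C_{h-1}$ is also a shelling order. -/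
/-- `C 1, …, C h` is a shelling order (1-based indexing): for all `1 ≤ i < j ≤ h`
there is `z < j` with `|C z ∩ C j| = k - 1` and `C i ∩ C j ⊆ C z ∩ C j`. -/
def IsShellingOn (k h : ℕ) (C : ℕ → Finset ℕ) : Prop :=
  ∀ i j, 1 ≤ i → i < j → j ≤ h → ∃ z, 1 ≤ z ∧ z < j ∧
    ((C z ∩ C j).card = k - 1 ∧ C i ∩ C j ⊆ C z ∩ C j)

/-- If `C 1, …, C h` (`h ≥ 3`) is a shelling order of distinct `k`-subsets of
`[n]` and `|C (h-1) ∩ C h| < k - 1`, then swapping the last two facets again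
yields a shelling order. -/
theorem swap_last_two_shelling
    (n k h : ℕ) (h3 : 3 ≤ h) (C : ℕ → Finset ℕ)
    (hsub : ∀ i, 1 ≤ i → i ≤ h → C i ⊆ Finset.Icc 1 n ∧ (C i).card = k)
    (hdist : ∀ i j, 1 ≤ i → i < j → j ≤ h → C i ≠ C j)
    (hshell : IsShellingOn k h C)
    (hsmall : (C (h - 1) ∩ C h).card < k - 1) :
    IsShellingOn k h
      (fun m => if m = h - 1 then C h else if m = h then C (h - 1) else C m) := by
  intro i j hi hij hjh
  by_cases hj1 : j = h - 1
  · -- j = h - 1 : new C j is old C h, i < h - 1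
    obtain ⟨z, hz1, hzh, hcard, hsubz⟩ := hshell i h hi (by omega) le_rfl
    have hzne : z ≠ h - 1 := by intro e; rw [e] at hcard; omega
    refine ⟨z, hz1, by omega, ?_, ?_⟩ <;>
      simp only [hj1, if_neg (show z ≠ h - 1 from hzne),
        if_neg (show z ≠ h by omega), if_pos rfl,
        if_neg (show i ≠ h - 1 by omega), if_neg (show i ≠ h by omega)]
    · exact hcard
    · exact hsubz
  · by_cases hjh' : j = h
    · -- j = h : new C j is old C (h - 1)
      by_cases hih : i = h - 1
      · -- swapped pair itself
        obtain ⟨z, hz1, hzh, hcard, hsubz⟩ :=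
          hshell (h - 1) h (by omega) (by omega) le_rfl
        have hzne : z ≠ h - 1 := by intro e; rw [e] at hcard; omega
        obtain ⟨w, hw1, hwh, hcardw, hsubw⟩ :=
          hshell z (h - 1) hz1 (by omega) (by omega)
        refine ⟨w, hw1, by omega, ?_, ?_⟩ <;>
          simp only [hjh', if_neg (show w ≠ h - 1 by omega),
            if_neg (show w ≠ h by omega), if_neg (show h ≠ h - 1 by omega),
            if_pos rfl, hih]
        · exact hcardw
        · intro x hx
          rw [Finset.mem_inter] at hx
          have hxz : x ∈ C z := (Finset.mem_inter.mp (hsubz (Finset.mem_inter.mpr ⟨hx.2, hx.1⟩))).1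
          exact hsubw (Finset.mem_inter.mpr ⟨hxz, hx.2⟩)
      · -- i < h - 1
        obtain ⟨z, hz1, hzh, hcard, hsubz⟩ :=
          hshell i (h - 1) hi (by omega) (by omega)
        refine ⟨z, hz1, by omega, ?_, ?_⟩ <;>
          simp only [hjh', if_neg (show z ≠ h - 1 by omega),
            if_neg (show z ≠ h by omega), if_neg (show h ≠ h - 1 by omega),
            if_pos rfl, if_neg (show i ≠ h - 1 from hih),
            if_neg (show i ≠ h by omega)]
        · exact hcard
        · exact hsubz
    · -- j < h - 1 : nothing changed
      obtain ⟨z, hz1, hzj, hcard, hsubz⟩ := hshell i j hi hij hjh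
      refine ⟨z, hz1, hzj, ?_, ?_⟩ <;>
        simp only [if_neg (show z ≠ h - 1 by omega),
          if_neg (show z ≠ h by omega), if_neg (show j ≠ h - 1 from hj1),
          if_neg (show j ≠ h from hjh'), if_neg (show i ≠ h - 1 by omega),
          if_neg (show i ≠ h by omega)]
      · exact hcard
      · exact hsubz
end

section
/- Let $C = (C_1, \ldots, C_h)$ be a shelling order of a pure simplicial complex with facets $k$-subsets of $[n]$. Then the promotion $\partial_D C$ of $C$ with respect to the dual graph of $C$ is again a shelling order. -/
/-- The track of a graph `E` on vertex set `[h]` (1-based): `1` is in the track,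
and from a track element `v` the next track element is the least `j ∈ [h]` with
`j > v` and `{v, j}` an edge. -/
inductive InTrack (E : ℕ → ℕ → Prop) (h : ℕ) : ℕ → Prop where
  | base : 1 ≤ h → InTrack E h 1
  | step (v j : ℕ) : InTrack E h v → v < j → j ≤ h → E v j →
      (∀ m, v < m → m < j → ¬ E v m) → InTrack E h j

open scoped Classical in
/-- The promotion permutation `∂_G` of a graph `G = ([h], E)`:
`i ↦ i - 1` for `i` not in the track, each track element is sent to
(next track element) − 1, and the last track element is sent to `h`. -/
noncomputable def promoPerm (E : ℕ → ℕ → Prop) (h : ℕ) (i : ℕ) : ℕ :=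
  if InTrack E h i then
    if {j | InTrack E h j ∧ i < j}.Nonempty then sInf {j | InTrack E h j ∧ i < j} - 1
    else h
  else i - 1

/-- The dual graph of the sequence `C` of `k`-subsets: `{i, j}` is an edge iff
`|C i ∩ C j| = k - 1`. -/
def dualE (k : ℕ) (C : ℕ → Finset ℕ) (i j : ℕ) : Prop :=
  i ≠ j ∧ (C i ∩ C j).card = k - 1

/-- `c` is the step-successor of `v` in the graph `E` on `[h]`. -/
def IsStepPP (E : ℕ → ℕ → Prop) (h : ℕ) (v c : ℕ) : Prop :=
  v < c ∧ c ≤ h ∧ E v c ∧ ∀ m, v < m → m < c → ¬ E v m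

lemma inTrack_bounds {E : ℕ → ℕ → Prop} {h x : ℕ} (hx : InTrack E h x) :
    1 ≤ x ∧ x ≤ h := by
  induction hx with
  | base h1 => exact ⟨le_refl 1, h1⟩
  | step v j _ hvj hjh _ _ _ => exact ⟨by omega, hjh⟩

lemma isStep_unique {E : ℕ → ℕ → Prop} {h v c₁ c₂ : ℕ}
    (h1 : IsStepPP E h v c₁) (h2 : IsStepPP E h v c₂) : c₁ = c₂ := by
  rcases lt_trichotomy c₁ c₂ with hlt | heq | hlt
  · exact absurd h1.2.2.1 (h2.2.2.2 c₁ h1.1 hlt)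
  · exact heq
  · exact absurd h2.2.2.1 (h1.2.2.2 c₂ h2.1 hlt)

lemma isStep_exists {E : ℕ → ℕ → Prop} {h v j : ℕ}
    (hvj : v < j) (hjh : j ≤ h) (hE : E v j) :
    ∃ c, IsStepPP E h v c ∧ c ≤ j := by
  classical
  have hex : ∃ m, v < m ∧ m ≤ j ∧ E v m := ⟨j, hvj, le_refl j, hE⟩
  obtain ⟨hc1, hc2, hc3⟩ := Nat.find_spec hex
  refine ⟨Nat.find hex, ⟨hc1, le_trans hc2 hjh, hc3, ?_⟩, hc2⟩
  intro m hm1 hm2 hEm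
  exact Nat.find_min hex hm2 ⟨hm1, by omega, hEm⟩

lemma key {E : ℕ → ℕ → Prop} {h : ℕ} :
    ∀ b, InTrack E h b → ∀ u c, InTrack E h u → IsStepPP E h u c → u < b → c ≤ b := by
  intro b
  induction b using Nat.strong_induction_on with
  | _ b ih =>
    intro hb u c hu hc hub
    cases hb with
    | base hh => exact absurd (inTrack_bounds hu).1 (by omega)
    | step w b hw hwb hbh hE hmin =>
      rcases lt_trichotomy u w with h1 | h1 | h1
      · have := ih w (by omega) hw u c hu hc h1
        omega
      · subst h1
        have := isStep_unique hc ⟨hwb, hbh, hE, hmin⟩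
        omega
      · have := ih u hub hu w b hw ⟨hwb, hbh, hE, hmin⟩ h1
        omega

lemma no_succ_top {E : ℕ → ℕ → Prop} {h v : ℕ} (hv : InTrack E h v)
    (hns : ∀ m, v < m → m ≤ h → ¬ E v m) :
    ∀ m, InTrack E h m → m ≤ v := by
  intro m
  induction m using Nat.strong_induction_on with
  | _ m ih =>
    intro hm
    cases hm with
    | base hh => exact (inTrack_bounds hv).1
    | step w m hw hwm hmh hE hmin =>
      have hwv : w ≤ v := ih w (by omega) hw
      rcases eq_or_lt_of_le hwv with h1 | h1
      · subst h1
        exact absurd hE (hns m hwm hmh)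
      · exact key v hv w m hw ⟨hwm, hmh, hE, hmin⟩ h1

lemma promo_nontrack {E : ℕ → ℕ → Prop} {h x : ℕ} (hx : ¬ InTrack E h x) :
    promoPerm E h x = x - 1 := by
  simp only [promoPerm, if_neg hx]

lemma promo_step {E : ℕ → ℕ → Prop} {h v c : ℕ}
    (hv : InTrack E h v) (hc : IsStepPP E h v c) :
    promoPerm E h v = c - 1 := by
  have hcT : InTrack E h c := InTrack.step v c hv hc.1 hc.2.1 hc.2.2.1 hc.2.2.2
  have hmem : c ∈ {j | InTrack E h j ∧ v < j} := ⟨hcT, hc.1⟩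
  have hne : {j | InTrack E h j ∧ v < j}.Nonempty := ⟨c, hmem⟩
  have hinf : sInf {j | InTrack E h j ∧ v < j} = c := by
    have h1 : sInf {j | InTrack E h j ∧ v < j} ≤ c := Nat.sInf_le hmem
    have h2 := Nat.sInf_mem hne
    have h3 := key _ h2.1 v c hv hc h2.2
    omega
  simp only [promoPerm, if_pos hv, if_pos hne, hinf]

lemma promo_nosucc {E : ℕ → ℕ → Prop} {h v : ℕ} (hv : InTrack E h v)
    (hns : ∀ m, v < m → m ≤ h → ¬ E v m) :
    promoPerm E h v = h := by
  have hemp : ¬ {j | InTrack E h j ∧ v < j}.Nonempty := by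
    rintro ⟨m, hm, hvm⟩
    have := no_succ_top hv hns m hm
    omega
  simp only [promoPerm, if_pos hv, if_neg hemp]

lemma succ_or (E : ℕ → ℕ → Prop) (h v : ℕ) :
    (∃ c, IsStepPP E h v c) ∨ (∀ m, v < m → m ≤ h → ¬ E v m) := by
  by_cases hx : ∃ m, v < m ∧ m ≤ h ∧ E v m
  · obtain ⟨m, h1, h2, h3⟩ := hx
    obtain ⟨c, hc, _⟩ := isStep_exists h1 h2 h3
    exact Or.inl ⟨c, hc⟩
  · push_neg at hx
    exact Or.inr fun m h1 h2 => hx m h1 h2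

lemma promo_cases {E : ℕ → ℕ → Prop} {h : ℕ} (hh : 1 ≤ h) {x : ℕ}
    (hx1 : 1 ≤ x) (hxh : x ≤ h) :
    (¬ InTrack E h x ∧ 2 ≤ x ∧ promoPerm E h x = x - 1) ∨
    (∃ c, InTrack E h x ∧ InTrack E h c ∧ IsStepPP E h x c ∧ x < c ∧ c ≤ h ∧
      promoPerm E h x = c - 1) ∨
    (InTrack E h x ∧ (∀ m, x < m → m ≤ h → ¬ E x m) ∧ promoPerm E h x = h ∧
      ∀ m, InTrack E h m → m ≤ x) := by
  by_cases hT : InTrack E h x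
  · rcases succ_or E h x with ⟨c, hc⟩ | hns
    · exact Or.inr (Or.inl ⟨c, hT, InTrack.step x c hT hc.1 hc.2.1 hc.2.2.1 hc.2.2.2,
        hc, hc.1, hc.2.1, promo_step hT hc⟩)
    · exact Or.inr (Or.inr ⟨hT, hns, promo_nosucc hT hns, fun m hm => no_succ_top hT hns m hm⟩)
  · refine Or.inl ⟨hT, ?_, promo_nontrack hT⟩
    by_contra hlt
    have hx1' : x = 1 := by omega
    subst hx1'
    exact hT (InTrack.base hh)

lemma promo_inj {E : ℕ → ℕ → Prop} {h : ℕ} (hh : 1 ≤ h) {a b : ℕ}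
    (ha1 : 1 ≤ a) (hah : a ≤ h) (hb1 : 1 ≤ b) (hbh : b ≤ h)
    (heq : promoPerm E h a = promoPerm E h b) : a = b := by
  rcases promo_cases (E := E) hh ha1 hah with
      ⟨haT, ha2, hap⟩ | ⟨ca, haT, hcaT, hsa, haca, hcah, hap⟩ | ⟨haT, hans, hap, hatop⟩ <;>
    rcases promo_cases (E := E) hh hb1 hbh with
      ⟨hbT, hb2, hbp⟩ | ⟨cb, hbT, hcbT, hsb, hbcb, hcbh, hbp⟩ | ⟨hbT, hbns, hbp, hbtop⟩
  · omega
  · exfalso; apply haT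
    have : a = cb := by omega
    exact this ▸ hcbT
  · omega
  · exfalso; apply hbT
    have : b = ca := by omega
    exact this ▸ hcaT
  · have hcc : ca = cb := by omega
    subst hcc
    rcases lt_trichotomy a b with h1 | h1 | h1
    · have := key b hbT a ca haT hsa h1
      omega
    · exact h1
    · have := key a haT b ca hbT hsb h1
      omega
  · omega
  · omega
  · omega
  · have h1 := hatop b hbT
    have h2 := hbtop a haT
    omega

lemma core_lemma {k h : ℕ} {C : ℕ → Finset ℕ} (hshell : IsShellingOn k h C)
    {v B : ℕ} (hv1 : 1 ≤ v) (hvh : v ≤ h) (hvB : v < B)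
    (hnoe : ∀ m, v < m → m < B → m ≤ h → (C v ∩ C m).card ≠ k - 1) :
    ∀ i, 1 ≤ i → i ≤ h → i < B → i ≠ v →
      ∃ z, 1 ≤ z ∧ z ≤ h ∧ z < B ∧ z ≠ v ∧ (C z ∩ C v).card = k - 1 ∧
        C i ∩ C v ⊆ C z ∩ C v := by
  intro i
  induction i using Nat.strong_induction_on with
  | _ i ih =>
    intro hi1 hih hiB hiv
    rcases Nat.lt_or_ge i v with hlt | hge
    · obtain ⟨z, hz1, hzv, hcard, hsubz⟩ := hshell i v hi1 hlt hvh
      exact ⟨z, hz1, by omega, by omega, by omega, hcard, hsubz⟩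
    · have hvi : v < i := lt_of_le_of_ne hge (Ne.symm hiv)
      obtain ⟨z, hz1, hzi, hcard, hsubz⟩ := hshell v i hv1 hvi hih
      have hzv : z ≠ v := by
        rintro rfl
        exact hnoe i hvi hiB hih hcard
      obtain ⟨z', h1, h2, h3, h4, h5, h6⟩ := ih z hzi hz1 (by omega) (by omega) hzv
      refine ⟨z', h1, h2, h3, h4, h5, ?_⟩
      intro x hx
      rw [Finset.mem_inter] at hx
      apply h6
      have hmem : x ∈ C z ∩ C i := hsubz (Finset.mem_inter.mpr ⟨hx.2, hx.1⟩)
      exact Finset.mem_inter.mpr ⟨(Finset.mem_inter.mp hmem).1, hx.2⟩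

/-- Promotion of a shelling order with respect to its dual graph is again a
shelling order: if `C'` is the rearrangement `∂_D C`, i.e. the entry of `C'` in
position `∂_{D(C)}(i)` is `C i`, then `C'` is a shelling order. -/
theorem promotion_of_shelling
    (n k h : ℕ) (C C' : ℕ → Finset ℕ)
    (hsub : ∀ i, 1 ≤ i → i ≤ h → C i ⊆ Finset.Icc 1 n ∧ (C i).card = k)
    (hdist : ∀ i j, 1 ≤ i → i < j → j ≤ h → C i ≠ C j)
    (hshell : IsShellingOn k h C)
    (hC' : ∀ m, 1 ≤ m → m ≤ h →
      ∃ i, 1 ≤ i ∧ i ≤ h ∧ promoPerm (dualE k C) h i = m ∧ C' m = C i) :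
    IsShellingOn k h C' := by
  intro i' j' hi'1 hij' hj'h
  have hh : 1 ≤ h := by omega
  obtain ⟨j, hj1, hjh, hjp, hjC⟩ := hC' j' (by omega) hj'h
  obtain ⟨i, hi1, hih, hip, hiC⟩ := hC' i' hi'1 (by omega)
  suffices H : ∃ z, 1 ≤ z ∧ z ≤ h ∧ (C z ∩ C j).card = k - 1 ∧ C i ∩ C j ⊆ C z ∩ C j ∧
      1 ≤ promoPerm (dualE k C) h z ∧ promoPerm (dualE k C) h z < j' by
    obtain ⟨z, hz1, hzh, hcard, hsubz, hp1, hp2⟩ := H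
    obtain ⟨z₂, hz21, hz2h, hz2p, hz2C⟩ := hC' (promoPerm (dualE k C) h z) hp1 (by omega)
    have hzz : z₂ = z := promo_inj hh hz21 hz2h hz1 hzh hz2p
    subst hzz
    refine ⟨promoPerm (dualE k C) h z₂, hp1, hp2, ?_, ?_⟩
    · rw [hjC, hz2C]; exact hcard
    · rw [hiC, hjC, hz2C]; exact hsubz
  rcases promo_cases (E := dualE k C) hh hj1 hjh with
      ⟨hjT, hj2, hjp'⟩ | ⟨c, hjT, hcT, hstep, hjc, hch, hjp'⟩ | ⟨hjT, hjns, hjp', hjtop⟩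
  · -- j not in track : j' = j - 1
    have hj' : j' = j - 1 := by rw [← hjp, hjp']
    have hij : i < j := by
      rcases promo_cases (E := dualE k C) hh hi1 hih with
          ⟨hiT, hi2, hipp⟩ | ⟨ci, hiT, hciT, histep, hici, hcih, hipp⟩ | ⟨hiT, hins, hipp, hitop⟩
      · omega
      · omega
      · omega
    obtain ⟨z, hz1, hzj, hcard, hsubz⟩ := hshell i j hi1 hij hjh
    refine ⟨z, hz1, by omega, hcard, hsubz, ?_, ?_⟩ <;>
    · by_cases hzT : InTrack (dualE k C) h z
      · have hEzj : dualE k C z j := ⟨by omega, hcard⟩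
        obtain ⟨cz, hcz, hczj⟩ := isStep_exists hzj hjh hEzj
        have hczT : InTrack (dualE k C) h cz :=
          InTrack.step z cz hzT hcz.1 hcz.2.1 hcz.2.2.1 hcz.2.2.2
        have hczne : cz ≠ j := by
          rintro rfl
          exact hjT hczT
        have hpz := promo_step hzT hcz
        have := hcz.1
        omega
      · have hpz := promo_nontrack hzT
        have hz2 : 2 ≤ z := by
          by_contra hcon
          have : z = 1 := by omega
          subst this
          exact hzT (InTrack.base hh)
        omega
  · -- j in track with step-successor c : j' = c - 1
    have hj' : j' = c - 1 := by rw [← hjp, hjp']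
    have hinej : i ≠ j := by
      rintro rfl
      rw [hip] at hjp
      omega
    have hic : i < c := by
      rcases promo_cases (E := dualE k C) hh hi1 hih with
          ⟨hiT, hi2, hipp⟩ | ⟨ci, hiT, hciT, histep, hici, hcih, hipp⟩ | ⟨hiT, hins, hipp, hitop⟩
      · omega
      · omega
      · omega
    have hnoe : ∀ m, j < m → m < c → m ≤ h → (C j ∩ C m).card ≠ k - 1 := by
      intro m h1 h2 h3 hcardm
      exact hstep.2.2.2 m h1 h2 ⟨by omega, hcardm⟩
    obtain ⟨z, hz1, hzh, hzc, hznej, hcard, hsubz⟩ :=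
      core_lemma hshell hj1 hjh hjc hnoe i hi1 hih hic hinej
    refine ⟨z, hz1, hzh, hcard, hsubz, ?_, ?_⟩ <;>
    · by_cases hzT : InTrack (dualE k C) h z
      · have hzj : z < j := by
          rcases lt_trichotomy z j with h1 | h1 | h1
          · exact h1
          · exact absurd h1 hznej
          · have := key z hzT j c hjT hstep h1
            omega
        have hEzj : dualE k C z j := ⟨by omega, hcard⟩
        obtain ⟨cz, hcz, hczj⟩ := isStep_exists hzj hjh hEzj
        have hpz := promo_step hzT hcz
        have := hcz.1
        omega
      · have hpz := promo_nontrack hzT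
        have hz2 : 2 ≤ z := by
          by_contra hcon
          have : z = 1 := by omega
          subst this
          exact hzT (InTrack.base hh)
        omega
  · -- j in track, last element : j' = h
    have hj' : j' = h := by rw [← hjp, hjp']
    have hinej : i ≠ j := by
      rintro rfl
      rw [hip] at hjp
      omega
    have hnoe : ∀ m, j < m → m < h + 1 → m ≤ h → (C j ∩ C m).card ≠ k - 1 := by
      intro m h1 h2 h3 hcardm
      exact hjns m h1 h3 ⟨by omega, hcardm⟩
    obtain ⟨z, hz1, hzh, hzc, hznej, hcard, hsubz⟩ :=
      core_lemma hshell hj1 hjh (by omega : j < h + 1) hnoe i hi1 hih (by omega) hinej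
    refine ⟨z, hz1, hzh, hcard, hsubz, ?_, ?_⟩ <;>
    · by_cases hzT : InTrack (dualE k C) h z
      · have hzj : z < j := by
          have := hjtop z hzT
          omega
        have hEzj : dualE k C z j := ⟨by omega, hcard⟩
        obtain ⟨cz, hcz, hczj⟩ := isStep_exists hzj hjh hEzj
        have hpz := promo_step hzT hcz
        have := hcz.1
        omega
      · have hpz := promo_nontrack hzT
        have hz2 : 2 ≤ z := by
          by_contra hcon
          have : z = 1 := by omega
          subst this
          exact hzT (InTrack.base hh)
        omega
end

section
/- For a graph $G$ on vertex set $[h]$ with track $T_G$, the promotion permutation satisfies $\partial_G = s^G_{h-1} s^G_{h-2} \cdots s^G_1$ (acting on sequences), where $s^G_i$ is the adjacent transposition $s_i$ if $\{i, i+1\}$ is not an edge of $G$, and the identity otherwise. -/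
open scoped Classical in
/-- One step `s^G_i` of the promotion process, acting on the sequence of labels
`w : position → label`: the entries in positions `i` and `i+1` are swapped iff
they are not adjacent in the graph `E` (graph structure transported along the
relabeling). -/
noncomputable def oneStep (E : ℕ → ℕ → Prop) (i : ℕ) (w : ℕ → ℕ) : ℕ → ℕ :=
  if E (w i) (w (i + 1)) then w
  else fun m => if m = i then w (i + 1) else if m = i + 1 then w i else w m

/-- The result of applying `s^G_1`, then `s^G_2`, …, then `s^G_r` to the
identity labeling. -/
noncomputable def promoAction (E : ℕ → ℕ → Prop) : ℕ → (ℕ → ℕ)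
  | 0 => id
  | r + 1 => oneStep E (r + 1) (promoAction E r)


namespace PromoAux

variable {E : ℕ → ℕ → Prop} {h : ℕ}

lemma track_bounds {v : ℕ} (hv : InTrack E h v) : 1 ≤ v ∧ v ≤ h := by
  induction hv with
  | base h1 => exact ⟨le_refl 1, h1⟩
  | step v j hv hvj hjh hE hmin ih => exact ⟨le_trans ih.1 (le_of_lt hvj), hjh⟩

lemma track_linear : ∀ v, InTrack E h v → ∀ u, InTrack E h u → u < v →
    ∃ j, u < j ∧ j ≤ v ∧ E u j := by
  intro v
  induction v using Nat.strong_induction_on with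
  | _ v ihs =>
    intro hv u hu huv
    cases hv with
    | base h1 =>
      have := track_bounds hu
      omega
    | step u' v hu' hu'v hvh hE hmin =>
      rcases lt_trichotomy u u' with hlt | heq | hgt
      · obtain ⟨j, hj1, hj2, hj3⟩ := ihs u' hu'v hu' u hu hlt
        exact ⟨j, hj1, le_trans hj2 (le_of_lt hu'v), hj3⟩
      · subst heq; exact ⟨v, hu'v, le_refl v, hE⟩
      · obtain ⟨j, hj1, hj2, hj3⟩ := ihs u huv hu u' hu' hgt
        exact absurd hj3 (hmin j hj1 (lt_of_le_of_lt hj2 huv))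

/-- the largest track element `≤ r` -/
noncomputable def tmax (E : ℕ → ℕ → Prop) (h r : ℕ) : ℕ :=
  sSup {v | InTrack E h v ∧ v ≤ r}

lemma tmax_spec (h1 : 1 ≤ h) {r : ℕ} (hr1 : 1 ≤ r) :
    InTrack E h (tmax E h r) ∧ tmax E h r ≤ r ∧
      ∀ u, InTrack E h u → u ≤ r → u ≤ tmax E h r := by
  have hne : {v | InTrack E h v ∧ v ≤ r}.Nonempty := ⟨1, InTrack.base h1, hr1⟩
  have hbdd : BddAbove {v | InTrack E h v ∧ v ≤ r} := ⟨r, fun x hx => hx.2⟩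
  have hmem := Nat.sSup_mem hne hbdd
  exact ⟨hmem.1, hmem.2, fun u hu hur => le_csSup hbdd ⟨hu, hur⟩⟩

lemma tmax_no_nbr (h1 : 1 ≤ h) {r : ℕ} (hr1 : 1 ≤ r) (hrh : r ≤ h) :
    ∀ m, tmax E h r < m → m ≤ r → ¬ E (tmax E h r) m := by
  intro m hm1 hm2 hEm
  obtain ⟨htr, hle, hub⟩ := tmax_spec (E := E) h1 hr1
  have hS : {j | tmax E h r < j ∧ E (tmax E h r) j}.Nonempty := ⟨m, hm1, hEm⟩
  have hj0 := Nat.sInf_mem hS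
  have hgt := hj0.1
  have hj0le : sInf {j | tmax E h r < j ∧ E (tmax E h r) j} ≤ m := Nat.sInf_le ⟨hm1, hEm⟩
  have htr0 : InTrack E h (sInf {j | tmax E h r < j ∧ E (tmax E h r) j}) :=
    InTrack.step _ _ htr hj0.1 (by omega) hj0.2
      (fun m' hm'1 hm'2 hEm' => by
        have : sInf {j | tmax E h r < j ∧ E (tmax E h r) j} ≤ m' := Nat.sInf_le ⟨hm'1, hEm'⟩
        omega)
  have := hub _ htr0 (by omega)
  omega

open scoped Classical in
lemma invariant (E : ℕ → ℕ → Prop) (h : ℕ) (h1 : 1 ≤ h) :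
    ∀ r, r + 1 ≤ h →
      (∀ m, m = 0 ∨ r + 2 ≤ m → promoAction E r m = m) ∧
      promoAction E r (r + 1) = tmax E h (r + 1) ∧
      (∀ m, 1 ≤ m → m ≤ r →
        promoAction E r m = if InTrack E h (m + 1) then tmax E h m else m + 1) := by
  intro r
  induction r with
  | zero =>
    intro _
    refine ⟨fun m hm => rfl, ?_, fun m hm1 hm2 => by omega⟩
    obtain ⟨ht, hle, -⟩ := tmax_spec (E := E) h1 (le_refl 1)
    have := track_bounds ht
    show (1 : ℕ) = tmax E h 1
    omega
  | succ r ih =>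
    intro hrh
    obtain ⟨ha, hb, hc⟩ := ih (by omega)
    have hw2 : promoAction E r (r + 2) = r + 2 := ha _ (Or.inr (by omega))
    have step_eq : promoAction E (r + 1) = oneStep E (r + 1) (promoAction E r) := rfl
    obtain ⟨hvt, hvle, hvub⟩ := tmax_spec (E := E) (r := r + 1) h1 (by omega)
    have hbridge : tmax E h (r + 1 + 1) = tmax E h (r + 2) := rfl
    by_cases hE : E (promoAction E r (r + 1)) (promoAction E r (r + 1 + 1))
    · -- no swap
      have hE' : E (tmax E h (r + 1)) (r + 2) := by
        rw [hb, show promoAction E r (r + 1 + 1) = r + 2 from hw2] at hE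
        exact hE
      have htr2 : InTrack E h (r + 2) :=
        InTrack.step _ _ hvt (by omega) (by omega) hE'
          (fun m hm1 hm2 =>
            tmax_no_nbr (E := E) (r := r + 1) h1 (by omega) (by omega) m hm1 (by omega))
      have hws : promoAction E (r + 1) = promoAction E r := by
        rw [step_eq]; unfold oneStep; rw [if_pos hE]
      rw [hws]
      refine ⟨fun m hm => ha m (by omega), ?_, ?_⟩
      · show promoAction E r (r + 2) = tmax E h (r + 1 + 1)
        rw [hw2, hbridge]
        obtain ⟨ht2, hle2, hub2⟩ := tmax_spec (E := E) (r := r + 2) h1 (by omega)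
        have := hub2 _ htr2 (le_refl _)
        omega
      · intro m hm1 hm2
        rcases Nat.lt_or_ge m (r + 1) with hlt | hge
        · exact hc m hm1 (by omega)
        · have hme : m = r + 1 := by omega
          subst hme
          show promoAction E r (r + 1) = if InTrack E h (r + 2) then tmax E h (r + 1) else r + 2
          rw [if_pos htr2]
          exact hb
    · -- swap
      have hE' : ¬ E (tmax E h (r + 1)) (r + 2) := by
        rw [hb, show promoAction E r (r + 1 + 1) = r + 2 from hw2] at hE
        exact hE
      have hnt2 : ¬ InTrack E h (r + 2) := by
        intro ht2
        cases ht2 with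
        | step u _ hu huv hvh hEu hmin =>
          rcases Nat.lt_or_ge u (tmax E h (r + 1)) with hlt | hge
          · obtain ⟨j, hj1, hj2, hj3⟩ := track_linear _ hvt u hu hlt
            exact hmin j hj1 (by omega) hj3
          · have hule : u ≤ tmax E h (r + 1) := hvub u hu (by omega)
            have hue : u = tmax E h (r + 1) := by omega
            subst hue
            exact hE' hEu
      have hws : ∀ m, promoAction E (r + 1) m =
          if m = r + 1 then promoAction E r (r + 1 + 1)
          else if m = r + 1 + 1 then promoAction E r (r + 1) else promoAction E r m := by
        intro m
        rw [step_eq]; unfold oneStep; rw [if_neg hE]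
      refine ⟨?_, ?_, ?_⟩
      · intro m hm
        rw [hws m, if_neg (show ¬ m = r + 1 by omega), if_neg (show ¬ m = r + 1 + 1 by omega)]
        exact ha m (by omega)
      · rw [hws (r + 1 + 1), if_neg (show ¬ r + 1 + 1 = r + 1 by omega), if_pos rfl, hb,
          hbridge]
        obtain ⟨ht2, hle2, hub2⟩ := tmax_spec (E := E) (r := r + 2) h1 (by omega)
        have h1' : tmax E h (r + 1) ≤ tmax E h (r + 2) := hub2 _ hvt (by omega)
        have hne2 : tmax E h (r + 2) ≠ r + 2 := fun heq => hnt2 (heq ▸ ht2)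
        have h2' : tmax E h (r + 2) ≤ tmax E h (r + 1) := hvub _ ht2 (by omega)
        omega
      · intro m hm1 hm2
        rcases Nat.lt_or_ge m (r + 1) with hlt | hge
        · rw [hws m, if_neg (show ¬ m = r + 1 by omega), if_neg (show ¬ m = r + 1 + 1 by omega)]
          exact hc m hm1 (by omega)
        · have hme : m = r + 1 := by omega
          subst hme
          rw [hws (r + 1), if_pos rfl,
            show promoAction E r (r + 1 + 1) = r + 2 from hw2]
          show (r + 2 : ℕ) = if InTrack E h (r + 2) then tmax E h (r + 1) else r + 2
          rw [if_neg hnt2]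

end PromoAux

/-- `∂_G = s^G_{h-1} ⋯ s^G_1`: after applying the steps `s^G_1, …, s^G_{h-1}`,
the label in position `∂_G(l)` is `l`, for every vertex `l ∈ [h]`. -/
theorem promo_eq_composition
    (E : ℕ → ℕ → Prop) (hsym : ∀ i j, E i j → E j i) (h : ℕ) (h1 : 1 ≤ h) :
    ∀ l, 1 ≤ l → l ≤ h → promoAction E (h - 1) (promoPerm E h l) = l := by
  classical
  intro l hl1 hlh
  obtain ⟨ha, hb, hc⟩ := PromoAux.invariant E h h1 (h - 1) (by omega)
  have hh : h - 1 + 1 = h := by omega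
  rw [hh] at hb
  unfold promoPerm
  split_ifs with ht hne
  · -- l in track, has a later track element
    have hs := Nat.sInf_mem hne
    have hsle : sInf {j | InTrack E h j ∧ l < j} ≤ h := (PromoAux.track_bounds hs.1).2
    have hsgt : l < sInf {j | InTrack E h j ∧ l < j} := hs.2
    rw [hc (sInf {j | InTrack E h j ∧ l < j} - 1) (by omega) (by omega)]
    rw [if_pos (show InTrack E h (sInf {j | InTrack E h j ∧ l < j} - 1 + 1) by
      rw [show sInf {j | InTrack E h j ∧ l < j} - 1 + 1 = sInf {j | InTrack E h j ∧ l < j}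
        from by omega]
      exact hs.1)]
    obtain ⟨htm, hlem, hubm⟩ :=
      PromoAux.tmax_spec (E := E) (r := sInf {j | InTrack E h j ∧ l < j} - 1) h1 (by omega)
    have h1' : l ≤ PromoAux.tmax E h (sInf {j | InTrack E h j ∧ l < j} - 1) :=
      hubm l ht (by omega)
    have h2' : PromoAux.tmax E h (sInf {j | InTrack E h j ∧ l < j} - 1) ≤ l := by
      by_contra hgt
      have : sInf {j | InTrack E h j ∧ l < j} ≤
          PromoAux.tmax E h (sInf {j | InTrack E h j ∧ l < j} - 1) :=
        Nat.sInf_le ⟨htm, by omega⟩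
      omega
    omega
  · -- l is the last track element
    rw [hb]
    obtain ⟨htm, hlem, hubm⟩ := PromoAux.tmax_spec (E := E) (r := h) h1 h1
    have h1' : l ≤ PromoAux.tmax E h h := hubm l ht hlh
    have h2' : PromoAux.tmax E h h ≤ l := by
      by_contra hgt
      exact hne ⟨PromoAux.tmax E h h, htm, by omega⟩
    omega
  · -- l not in track
    have hl2 : 2 ≤ l := by
      by_contra hcon
      have hl1' : l = 1 := by omega
      exact ht (hl1' ▸ InTrack.base h1)
    rw [hc (l - 1) (by omega) (by omega)]
    rw [if_neg (show ¬ InTrack E h (l - 1 + 1) by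
      rw [show l - 1 + 1 = l from by omega]; exact ht)]
    omega
end

section
/- Let $L = (L_1, \ldots, L_h)$ be a linear extension of a finite subset $X \subseteq \binom{[n]}{k}$ with the Gale order, and suppose the Hasse diagram of $L$ (edges $\{i,j\}$ with $L_i \lessdot L_j$ a covering relation in $X$) is a subgraph of the dual graph of $L$ (edges $\{i,j\}$ with $|L_i \cap L_j| = k-1$). Then the tracks of the two graphs coincide: $T_{D(L)} = T_{H(L)}$, and consequently $\partial_D L = \partial_H L$. -/
/-- The Hasse graph of the labeled sequence `L` with respect to the collection
`X`: `{i, j}` is an edge iff `L i` and `L j` form a covering relation in the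
Gale order of `X`. -/
def hasseE (X : Set (Finset ℕ)) (L : ℕ → Finset ℕ) (i j : ℕ) : Prop :=
  (GaleLT (L i) (L j) ∧ ∀ z ∈ X, ¬(GaleLT (L i) z ∧ GaleLT z (L j))) ∨
  (GaleLT (L j) (L i) ∧ ∀ z ∈ X, ¬(GaleLT (L j) z ∧ GaleLT z (L i)))

/-!
For `v < j`, both a dual edge and a Hasse edge `{v, j}` force `L v < L j` in the Gale order: a
dual edge joins two `k`-sets differing in one element, which are Gale comparable, and the linear
extension fixes the direction. Conversely the first index `j > v` with `L v < L j` is a Hasse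
edge, hence a dual edge. So the first dual neighbour above `v`, the first Hasse neighbour above
`v` and the first Gale successor of `v` all coincide, and the tracks, which are obtained by
iterating first neighbours from `1`, agree.
-/

namespace List

variable {α : Type*} [LinearOrder α]

theorem forall₂_le_cons_orderedInsert {c b : α} (hcb : c ≤ b) :
    ∀ {l : List α}, l.Pairwise (· ≤ ·) → (∀ x ∈ l, c ≤ x) →
      Forall₂ (· ≤ ·) (c :: l) (l.orderedInsert (· ≤ ·) b)
  | [], _, _ => .cons hcb .nil
  | d :: t, hs, hc => by
    obtain ⟨hd, ht⟩ := pairwise_cons.mp hs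
    by_cases hbd : b ≤ d
    · rw [orderedInsert_cons_of_le _ _ hbd]
      exact .cons hcb (forall₂_refl _)
    · rw [orderedInsert_of_not_le _ _ hbd]
      exact .cons (hc d mem_cons_self) (forall₂_le_cons_orderedInsert (le_of_not_ge hbd) ht hd)

theorem forall₂_le_orderedInsert_orderedInsert {a b : α} (hab : a ≤ b) :
    ∀ {l : List α}, l.Pairwise (· ≤ ·) →
      Forall₂ (· ≤ ·) (l.orderedInsert (· ≤ ·) a) (l.orderedInsert (· ≤ ·) b)
  | [], _ => .cons hab .nil
  | c :: t, hs => by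
    obtain ⟨hc, ht⟩ := pairwise_cons.mp hs
    by_cases hac : a ≤ c
    · rw [orderedInsert_cons_of_le _ _ hac]
      by_cases hbc : b ≤ c
      · rw [orderedInsert_cons_of_le _ _ hbc]
        exact .cons hab (forall₂_refl _)
      · rw [orderedInsert_of_not_le _ _ hbc]
        exact .cons hac (forall₂_le_cons_orderedInsert (le_of_not_ge hbc) ht hc)
    · have hbc : ¬ b ≤ c := fun hbc => hac (hab.trans hbc)
      rw [orderedInsert_of_not_le _ _ hac, orderedInsert_of_not_le _ _ hbc]
      exact .cons le_rfl (forall₂_le_orderedInsert_orderedInsert hab ht)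

end List

theorem Finset.sort_insert_eq_orderedInsert {α : Type*} [LinearOrder α] {a : α} {s : Finset α}
    (ha : a ∉ s) :
    (insert a s).sort (· ≤ ·) = (s.sort (· ≤ ·)).orderedInsert (· ≤ ·) a := by
  refine List.Perm.eq_of_pairwise' (r := (· ≤ ·)) (pairwise_sort _ _)
    ((pairwise_sort _ _).orderedInsert _ _) ?_
  rw [← Multiset.coe_eq_coe, sort_eq, insert_val_of_notMem ha,
    Multiset.coe_eq_coe.mpr (List.perm_orderedInsert _ _ _), ← Multiset.cons_coe, sort_eq]

theorem galeLE_insert_insert {s : Finset ℕ} {a b : ℕ} (ha : a ∉ s) (hb : b ∉ s)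
    (hab : a ≤ b) :
    GaleLE (insert a s) (insert b s) := by
  have key := List.forall₂_le_orderedInsert_orderedInsert hab (s.pairwise_sort (· ≤ ·))
  rw [← Finset.sort_insert_eq_orderedInsert ha, ← Finset.sort_insert_eq_orderedInsert hb] at key
  exact (List.forall₂_iff_get.mp key).2

theorem galeLT_or_galeLT_of_card_inter {k : ℕ} {x y : Finset ℕ} (hx : x.card = k)
    (hy : y.card = k) (hne : x ≠ y) (hxy : (x ∩ y).card = k - 1) :
    GaleLT x y ∨ GaleLT y x := by
  obtain _ | k := k
  · exact absurd ((Finset.card_eq_zero.mp hx).trans (Finset.card_eq_zero.mp hy).symm) hne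
  obtain ⟨a, ha, hxa⟩ := Finset.exists_eq_insert_iff (s := x ∩ y) (t := x).mpr
    ⟨Finset.inter_subset_left, by omega⟩
  obtain ⟨b, hb, hyb⟩ := Finset.exists_eq_insert_iff (s := x ∩ y) (t := y).mpr
    ⟨Finset.inter_subset_right, by omega⟩
  generalize x ∩ y = s at ha hb hxa hyb
  rw [← hxa, ← hyb] at hne ⊢
  rcases le_total a b with hab | hba
  · exact .inl ⟨galeLE_insert_insert ha hb hab, hne⟩
  · exact .inr ⟨galeLE_insert_insert hb ha hba, hne.symm⟩

def IsFirstNbr (E : ℕ → ℕ → Prop) (v j : ℕ) : Prop :=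
  E v j ∧ ∀ m, v < m → m < j → ¬ E v m

theorem isFirstNbr_iff_of_imp {R S : ℕ → ℕ → Prop} {v j h : ℕ}
    (hRS : ∀ m, v < m → m ≤ h → R v m → S v m)
    (hS : ∀ m, v < m → m ≤ h → IsFirstNbr S v m → R v m) (hvj : v < j) (hjh : j ≤ h) :
    IsFirstNbr R v j ↔ IsFirstNbr S v j := by
  classical
  constructor
  · rintro ⟨hR, hRmin⟩
    have hex : ∃ m, v < m ∧ S v m := ⟨j, hvj, hRS j hvj hjh hR⟩
    have hle : Nat.find hex ≤ j := Nat.find_min' hex ⟨hvj, hRS j hvj hjh hR⟩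
    obtain ⟨hvm, hSm⟩ := Nat.find_spec hex
    have hfirst : IsFirstNbr S v (Nat.find hex) :=
      ⟨hSm, fun m hvm' hm hSm' => Nat.find_min hex hm ⟨hvm', hSm'⟩⟩
    have hRm := hS _ hvm (hle.trans hjh) hfirst
    obtain rfl : Nat.find hex = j :=
      hle.antisymm (not_lt.mp fun hlt => hRmin _ hvm hlt hRm)
    exact hfirst
  · rintro ⟨hS', hSmin⟩
    exact ⟨hS j hvj hjh ⟨hS', hSmin⟩, fun m hvm hmj hRm =>
      hSmin m hvm hmj (hRS m hvm (hmj.le.trans hjh) hRm)⟩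

theorem InTrack.one_le {E : ℕ → ℕ → Prop} {h i : ℕ} (ht : InTrack E h i) : 1 ≤ i := by
  induction ht with
  | base => exact le_rfl
  | step _ _ _ hvj => omega

theorem InTrack.of_isFirstNbr {E F : ℕ → ℕ → Prop} {h i : ℕ}
    (hEF : ∀ v j, 1 ≤ v → v < j → j ≤ h → IsFirstNbr E v j → IsFirstNbr F v j)
    (ht : InTrack E h i) : InTrack F h i := by
  induction ht with
  | base hh => exact .base hh
  | step v j hv hvj hjh hE hmin ih =>
    obtain ⟨hF, hFmin⟩ := hEF v j hv.one_le hvj hjh ⟨hE, hmin⟩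
    exact .step v j ih hvj hjh hF hFmin

theorem inTrack_iff_of_isFirstNbr_iff {E F : ℕ → ℕ → Prop} {h : ℕ}
    (hEF : ∀ v j, 1 ≤ v → v < j → j ≤ h → (IsFirstNbr E v j ↔ IsFirstNbr F v j))
    (i : ℕ) :
    InTrack E h i ↔ InTrack F h i :=
  ⟨.of_isFirstNbr fun v j hv hvj hjh => (hEF v j hv hvj hjh).1,
    .of_isFirstNbr fun v j hv hvj hjh => (hEF v j hv hvj hjh).2⟩

theorem promoPerm_congr {E F : ℕ → ℕ → Prop} {h : ℕ}
    (hEF : ∀ i, InTrack E h i ↔ InTrack F h i) :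
    promoPerm E h = promoPerm F h := by
  have : InTrack E h = InTrack F h := funext fun i => propext (hEF i)
  unfold promoPerm
  rw [this]

section LinearExtension

variable {k h : ℕ} {X : Set (Finset ℕ)} {L : ℕ → Finset ℕ}
  (hlin : ∀ i j, 1 ≤ i → i ≤ h → 1 ≤ j → j ≤ h → GaleLT (L i) (L j) → i < j)
include hlin

theorem galeLT_of_hasseE {v j : ℕ} (hv : 1 ≤ v) (hvj : v < j) (hjh : j ≤ h)
    (hH : hasseE X L v j) : GaleLT (L v) (L j) := by
  rcases hH with ⟨hlt, -⟩ | ⟨hgt, -⟩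
  · exact hlt
  · exact absurd (hlin j v (by omega) hjh hv (by omega) hgt) (by omega)

theorem galeLT_of_dualE (hcard : ∀ i, 1 ≤ i → i ≤ h → (L i).card = k)
    (hinj : ∀ i j, 1 ≤ i → i < j → j ≤ h → L i ≠ L j)
    {v j : ℕ} (hv : 1 ≤ v) (hvj : v < j) (hjh : j ≤ h)
    (hD : dualE k L v j) : GaleLT (L v) (L j) := by
  rcases galeLT_or_galeLT_of_card_inter (hcard v hv (by omega)) (hcard j (by omega) hjh)
    (hinj v j hv hvj hjh) hD.2 with hlt | hgt
  · exact hlt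
  · exact absurd (hlin j v (by omega) hjh hv (by omega) hgt) (by omega)

theorem hasseE_of_isFirstNbr_galeLT
    (hmem : ∀ x, x ∈ X ↔ ∃ m, 1 ≤ m ∧ m ≤ h ∧ L m = x)
    {v j : ℕ} (hv : 1 ≤ v) (hvj : v < j) (hjh : j ≤ h)
    (hj : IsFirstNbr (fun a b => GaleLT (L a) (L b)) v j) : hasseE X L v j := by
  refine .inl ⟨hj.1, fun z hz ⟨hvz, hzj⟩ => ?_⟩
  obtain ⟨p, hp, hph, rfl⟩ := (hmem z).1 hz
  have hvp := hlin v p hv (by omega) hp hph hvz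
  have hpj := hlin p j hp hph (by omega) hjh hzj
  exact hj.2 p hvp hpj hvz

end LinearExtension

/-- If the Hasse diagram of a linear extension `L` is a subgraph of its dual
graph, then the two tracks coincide and consequently `∂_D L = ∂_H L`
(the two promotion permutations coincide). -/
theorem promo_dual_eq_promo_hasse
    (n k h : ℕ) (X : Set (Finset ℕ))
    (hX : ∀ x ∈ X, x ⊆ Finset.Icc 1 n ∧ x.card = k)
    (L : ℕ → Finset ℕ)
    (hmem : ∀ x, x ∈ X ↔ ∃ m, 1 ≤ m ∧ m ≤ h ∧ L m = x)
    (hinj : ∀ i j, 1 ≤ i → i < j → j ≤ h → L i ≠ L j)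
    (hlin : ∀ i j, 1 ≤ i → i ≤ h → 1 ≤ j → j ≤ h → GaleLT (L i) (L j) → i < j)
    (hsub : ∀ i j, 1 ≤ i → i ≤ h → 1 ≤ j → j ≤ h →
      hasseE X L i j → dualE k L i j) :
    (∀ i, InTrack (dualE k L) h i ↔ InTrack (hasseE X L) h i) ∧
    (∀ i, promoPerm (dualE k L) h i = promoPerm (hasseE X L) h i) := by
  have hcard : ∀ i, 1 ≤ i → i ≤ h → (L i).card = k := fun i hi hih =>
    (hX _ ((hmem _).2 ⟨i, hi, hih, rfl⟩)).2
  have hfirst : ∀ v j, 1 ≤ v → v < j → j ≤ h →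
      (IsFirstNbr (dualE k L) v j ↔ IsFirstNbr (hasseE X L) v j) := by
    intro v j hv hvj hjh
    have hHasse : ∀ m, v < m → m ≤ h →
        IsFirstNbr (fun a b => GaleLT (L a) (L b)) v m → hasseE X L v m :=
      fun m hvm hmh => hasseE_of_isFirstNbr_galeLT hlin hmem hv hvm hmh
    have hDual := isFirstNbr_iff_of_imp (h := h)
      (fun m hvm hmh => galeLT_of_dualE hlin hcard hinj hv hvm hmh)
      (fun m hvm hmh hm => hsub v m hv (by omega) (by omega) hmh (hHasse m hvm hmh hm)) hvj hjh
    exact hDual.trans (isFirstNbr_iff_of_imp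
      (fun m hvm hmh => galeLT_of_hasseE hlin hv hvm hmh) hHasse hvj hjh).symm
  have htrack := inTrack_iff_of_isFirstNbr_iff hfirst
  exact ⟨htrack, congrFun (promoPerm_congr htrack)⟩
end

section
/- If $X \subseteq \binom{[n]}{k}$ is an order ideal or an interval in the Gale order, then the Hasse diagram of $X$ is a subgraph of the dual graph of $X$; that is, every covering relation $x \lessdot y$ in $X$ satisfies $|x \cap y| = k - 1$. -/
/-! Let `i` be the first position where the increasing enumerations of `x < y` differ, so
`x_i < y_i`. Since `y_j = x_j < x_i` for `j < i` and `x_i < y_i ≤ y_j` for `j ≥ i`, the element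
`x_i` is not in `y`, and replacing `y_i` by `x_i` in `y` gives a `k`-set `z` with `x ≤ z < y`.
Order ideals and intervals are order-convex, so `z ∈ X`, and the covering forces `z = x`: thus
`x` and `y` differ in a single element. -/

namespace List

variable {α : Type*}

lemma Nodup.toFinset_set [DecidableEq α] {l : List α} (hl : l.Nodup) {i : ℕ}
    (hi : i < l.length) (a : α) :
    (l.set i a).toFinset = insert a (l.toFinset.erase l[i]) := by
  ext c
  simp only [mem_toFinset, Finset.mem_insert, Finset.mem_erase, mem_iff_getElem,
    length_set, getElem_set]
  constructor
  · rintro ⟨j, hj, rfl⟩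
    split_ifs with hij
    · exact Or.inl rfl
    · exact Or.inr ⟨fun h => hij (hl.getElem_inj_iff.mp h).symm, j, hj, rfl⟩
  · rintro (rfl | ⟨hne, j, hj, rfl⟩)
    · exact ⟨i, hi, if_pos rfl⟩
    · exact ⟨j, hj, if_neg fun hij => hne (by subst hij; rfl)⟩

variable [LinearOrder α]

lemma exists_first_lt_of_forall_le {l m : List α} (hlen : l.length = m.length)
    (hle : ∀ i (hl : i < l.length) (hm : i < m.length), l[i] ≤ m[i]) (hne : l ≠ m) :
    ∃ i, ∃ (hl : i < l.length) (hm : i < m.length), l[i] < m[i] ∧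
      ∀ j (hl : j < l.length) (hm : j < m.length), j < i → l[j] = m[j] := by
  classical
  have hex : ∃ i, ∃ (hl : i < l.length) (hm : i < m.length), l[i] < m[i] := by
    by_contra! hge
    exact hne (ext_getElem hlen fun i hl hm => (hle i hl hm).antisymm (hge i hl hm))
  obtain ⟨hl, hm, hlt⟩ := Nat.find_spec hex
  refine ⟨Nat.find hex, hl, hm, hlt, fun j hl hm hj => (hle j hl hm).antisymm ?_⟩
  exact not_lt.mp fun hlt => Nat.find_min hex hj ⟨hl, hm, hlt⟩

lemma SortedLT.set {l : List α} {i : ℕ} {a : α} (hl : l.SortedLT)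
    (hlt : ∀ j (hj : j < l.length), j < i → l[j] < a)
    (hgt : ∀ j (hj : j < l.length), i < j → a < l[j]) :
    (l.set i a).SortedLT := by
  refine sortedLT_of_getElem_lt_getElem_of_lt fun p q hp hq hpq => ?_
  simp only [length_set] at hp hq
  simp only [getElem_set]
  split_ifs with hip hiq hiq
  · omega
  · exact hgt q hq (by omega)
  · exact hlt p hp (by omega)
  · exact hl.getElem_lt_getElem_of_lt hpq

end List

lemma sortedL_length (x : Finset ℕ) : (sortedL x).length = x.card :=
  Finset.length_sort _

lemma sortedL_sortedLT (x : Finset ℕ) : (sortedL x).SortedLT :=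
  Finset.sortedLT_sort x

lemma mem_sortedL {a : ℕ} {x : Finset ℕ} : a ∈ sortedL x ↔ a ∈ x :=
  Finset.mem_sort _

lemma toFinset_sortedL (x : Finset ℕ) : (sortedL x).toFinset = x :=
  Finset.sort_toFinset _ _

lemma sortedL_injective : Function.Injective sortedL := fun x y h => by
  rw [← toFinset_sortedL x, ← toFinset_sortedL y, h]

lemma List.SortedLT.sortedL_toFinset {l : List ℕ} (hl : l.SortedLT) : sortedL l.toFinset = l :=
  (List.toFinset_sort _ hl.nodup).2 hl.sortedLE.pairwise

lemma galeLE_iff {x y : Finset ℕ} : GaleLE x y ↔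
    ∀ i (hx : i < (sortedL x).length) (hy : i < (sortedL y).length),
      (sortedL x)[i] ≤ (sortedL y)[i] :=
  Iff.rfl

lemma GaleLE.trans {x y z : Finset ℕ} (hcard : x.card ≤ y.card) (hxy : GaleLE x y)
    (hyz : GaleLE y z) : GaleLE x z := fun i hx hz =>
  have hy : i < (sortedL y).length := by rw [sortedL_length] at hx ⊢; omega
  (hxy i hx hy).trans (hyz i hy hz)

lemma exists_galeLE_insert_erase_of_galeLT {x y : Finset ℕ} (hcard : x.card = y.card)
    (hxy : GaleLT x y) :
    ∃ a ∈ x, a ∉ y ∧ ∃ b ∈ y,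
      GaleLE x (insert a (y.erase b)) ∧ GaleLE (insert a (y.erase b)) y := by
  set l := sortedL x
  set m := sortedL y
  have hlen : l.length = m.length := by simp only [l, m, sortedL_length, hcard]
  obtain ⟨i, hil, him, hlt, heq⟩ := List.exists_first_lt_of_forall_le hlen hxy.1
    (fun h => hxy.2 (sortedL_injective h))
  have hbelow : ∀ j (hj : j < m.length), j < i → m[j] < l[i] := fun j hj hji =>
    heq j (by omega) hj hji ▸ (sortedL_sortedLT x).getElem_lt_getElem_of_lt hji
  have habove : ∀ j (hj : j < m.length), i ≤ j → l[i] < m[j] := fun j hj hij =>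
    hlt.trans_le ((sortedL_sortedLT y).sortedLE.getElem_le_getElem_of_le hij)
  have hnotin : l[i] ∉ m := by
    rw [List.mem_iff_getElem]
    rintro ⟨j, hj, hji⟩
    rcases lt_or_ge j i with h | h
    · exact (hbelow j hj h).ne hji
    · exact (habove j hj h).ne' hji
  have hsorted : (m.set i l[i]).SortedLT :=
    (sortedL_sortedLT y).set hbelow fun j hj hij => habove j hj hij.le
  have hz : sortedL (insert l[i] (y.erase m[i])) = m.set i l[i] := by
    rw [← hsorted.sortedL_toFinset, (sortedL_sortedLT y).nodup.toFinset_set him,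
      toFinset_sortedL]
  refine ⟨l[i], mem_sortedL.mp (List.getElem_mem hil), fun h => hnotin (mem_sortedL.mpr h),
    m[i], mem_sortedL.mp (List.getElem_mem him), ?_, ?_⟩
  · rw [galeLE_iff, hz]
    intro j hj hj'
    rw [List.getElem_set]
    split_ifs with hij
    · subst hij; rfl
    · exact hxy.1 j hj (by simpa using hj')
  · rw [galeLE_iff, hz]
    intro j hj hj'
    rw [List.getElem_set]
    split_ifs with hij
    · subst hij; exact hlt.le
    · rfl

def GaleOrdConnected (n k : ℕ) (X : Set (Finset ℕ)) : Prop :=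
  ∀ x ∈ X, ∀ y ∈ X, ∀ z : Finset ℕ, z ⊆ Finset.Icc 1 n → z.card = k →
    GaleLE x z → GaleLE z y → z ∈ X

lemma galeOrdConnected_of_isLowerSet {n k : ℕ} {X : Set (Finset ℕ)}
    (hX : ∀ y ∈ X, ∀ x : Finset ℕ, x ⊆ Finset.Icc 1 n → x.card = k → GaleLE x y → x ∈ X) :
    GaleOrdConnected n k X :=
  fun _ _ y hy z hz hzk _ hzy => hX y hy z hz hzk hzy

lemma galeOrdConnected_of_interval {n k : ℕ} {X : Set (Finset ℕ)} {a b : Finset ℕ}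
    (ha : a.card = k)
    (hX : ∀ z, z ∈ X ↔ (z ⊆ Finset.Icc 1 n ∧ z.card = k ∧ GaleLE a z ∧ GaleLE z b)) :
    GaleOrdConnected n k X := by
  intro x hx y hy z hz hzk hxz hzy
  obtain ⟨-, hxk, hax, -⟩ := (hX x).mp hx
  obtain ⟨-, hyk, -, hyb⟩ := (hX y).mp hy
  exact (hX z).mpr ⟨hz, hzk, hax.trans (ha.trans hxk.symm).le hxz,
    hzy.trans (hzk.trans hyk.symm).le hyb⟩

theorem GaleOrdConnected.card_inter_of_covBy {n k : ℕ} {X : Set (Finset ℕ)}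
    (hconv : GaleOrdConnected n k X) (hX : ∀ x ∈ X, x ⊆ Finset.Icc 1 n ∧ x.card = k)
    {x y : Finset ℕ} (hx : x ∈ X) (hy : y ∈ X)
    (hcov : GaleLT x y ∧ ∀ z ∈ X, ¬(GaleLT x z ∧ GaleLT z y)) :
    (x ∩ y).card = k - 1 := by
  obtain ⟨hxs, hxk⟩ := hX x hx
  obtain ⟨hys, hyk⟩ := hX y hy
  obtain ⟨a, hax, hay, b, hby, hxz, hzy⟩ :=
    exists_galeLE_insert_erase_of_galeLT (hxk.trans hyk.symm) hcov.1
  have hzs : insert a (y.erase b) ⊆ Finset.Icc 1 n :=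
    Finset.insert_subset (hxs hax) ((Finset.erase_subset b y).trans hys)
  have hzk : (insert a (y.erase b)).card = k := by
    rw [Finset.card_insert_of_notMem fun h => hay (Finset.mem_of_mem_erase h),
      Finset.card_erase_add_one hby, hyk]
  have hzX := hconv x hx y hy _ hzs hzk hxz hzy
  have hzx : insert a (y.erase b) = x := by
    by_contra hne
    exact hcov.2 _ hzX ⟨⟨hxz, Ne.symm hne⟩, hzy, fun h => hay (h ▸ Finset.mem_insert_self a _)⟩
  rw [← hzx, Finset.insert_inter_of_notMem hay,
    Finset.inter_eq_left.mpr (Finset.erase_subset b y), Finset.card_erase_of_mem hby, hyk]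

/-- If `X` is an order ideal or an interval in the Gale order on `k`-subsets of
`[n]`, then every covering relation `x ⋖ y` in `X` satisfies `|x ∩ y| = k - 1`,
i.e. the Hasse diagram of `X` is a subgraph of the dual graph of `X`. -/
theorem hasse_subgraph_dual
    (n k : ℕ) (X : Set (Finset ℕ))
    (hX : ∀ x ∈ X, x ⊆ Finset.Icc 1 n ∧ x.card = k)
    (hXi : (∀ y ∈ X, ∀ x : Finset ℕ, x ⊆ Finset.Icc 1 n → x.card = k →
              GaleLE x y → x ∈ X) ∨
           (∃ a b : Finset ℕ, a ⊆ Finset.Icc 1 n ∧ a.card = k ∧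
              b ⊆ Finset.Icc 1 n ∧ b.card = k ∧
              ∀ z, z ∈ X ↔ (z ⊆ Finset.Icc 1 n ∧ z.card = k ∧ GaleLE a z ∧ GaleLE z b)))
    (x y : Finset ℕ) (hx : x ∈ X) (hy : y ∈ X)
    (hcov : GaleLT x y ∧ ∀ z ∈ X, ¬(GaleLT x z ∧ GaleLT z y)) :
    (x ∩ y).card = k - 1 := by
  have hconv : GaleOrdConnected n k X := by
    rcases hXi with hideal | ⟨a, b, -, ha, -, -, hab⟩
    · exact galeOrdConnected_of_isLowerSet hideal
    · exact galeOrdConnected_of_interval ha hab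
  exact hconv.card_inter_of_covBy hX hx hy hcov
end

section
/- The evacuation of a shelling order is a shelling order: if $C = (C_1, \ldots, C_h)$ is a shelling order of $k$-subsets of $[n]$, then $\epsilon_D C := (\partial_{2,D} \circ \cdots \circ \partial_{h-1,D} \circ \partial_{h,D})(C)$ is a shelling order, where $\partial_{r,D}$ applies dual-graph promotion to the initial segment of length $r$ and fixes the tail. -/
open scoped Classical in
/-- The inverse of the promotion permutation `∂_G` of a graph on `[h]`:
position `h` receives the last track element, position `m` with `m + 1` in the
track receives the track element preceding `m + 1`, and any other position `m`
receives `m + 1`.  Thus `(∂_G C) m = C (promoInv E h m)`, i.e. the entry `C i`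
is moved to position `∂_G(i)`. -/
noncomputable def promoInv (E : ℕ → ℕ → Prop) (h m : ℕ) : ℕ :=
  if m = h then sSup {j | InTrack E h j}
  else if InTrack E h (m + 1) then sSup {j | InTrack E h j ∧ j < m + 1}
  else m + 1

/-- The partial promotion `∂_{r,D}`: dual-graph promotion applied to the
initial segment `C 1, …, C r`, fixing the tail. -/
noncomputable def partialPromo (k r : ℕ) (C : ℕ → Finset ℕ) : ℕ → Finset ℕ :=
  fun m => if 1 ≤ m ∧ m ≤ r then C (promoInv (dualE k C) r m) else C m

/-- Evacuation with respect to the dual graph: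
`ε_D = ∂_{2,D} ∘ ⋯ ∘ ∂_{h-1,D} ∘ ∂_{h,D}`. -/
noncomputable def evacFrom (k : ℕ) : ℕ → (ℕ → Finset ℕ) → (ℕ → Finset ℕ)
  | 0, C => C
  | 1, C => C
  | r + 2, C => evacFrom k (r + 1) (partialPromo k (r + 2) C)

namespace EvacAux

variable {E : ℕ → ℕ → Prop} {h : ℕ}

/-- `w` is the track-successor of `v`: the least neighbor of `v` above `v`. -/
def IsNext (E : ℕ → ℕ → Prop) (h v w : ℕ) : Prop :=
  v < w ∧ w ≤ h ∧ E v w ∧ ∀ m, v < m → m < w → ¬ E v m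

lemma _root_.InTrack.one_le_s15 {v : ℕ} (ht : InTrack E h v) : 1 ≤ v := by
  induction ht with
  | base _ => exact le_rfl
  | step v j _ hvj _ _ _ ih => omega

lemma _root_.InTrack.le_h {v : ℕ} (ht : InTrack E h v) : v ≤ h := by
  cases ht with
  | base h1 => exact h1
  | step v j _ _ hjh _ _ => exact hjh

lemma IsNext.unique {v w₁ w₂ : ℕ} (h1 : IsNext E h v w₁) (h2 : IsNext E h v w₂) :
    w₁ = w₂ := by
  by_contra hne
  rcases lt_or_gt_of_ne hne with hlt | hlt
  · exact h2.2.2.2 w₁ h1.1 hlt h1.2.2.1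
  · exact h1.2.2.2 w₂ h2.1 hlt h2.2.2.1

lemma next_exists {v : ℕ} (hv : InTrack E h v) :
    ∀ j, v < j → j ≤ h → E v j → ∃ w, IsNext E h v w ∧ InTrack E h w ∧ w ≤ j := by
  intro j
  induction j using Nat.strong_induction_on with
  | _ j ih =>
    intro hvj hjh hE
    by_cases hmin : ∀ m, v < m → m < j → ¬ E v m
    · exact ⟨j, ⟨hvj, hjh, hE, hmin⟩, .step _ _ hv hvj hjh hE hmin, le_rfl⟩
    · push_neg at hmin
      obtain ⟨m, h1, h2, h3⟩ := hmin
      obtain ⟨w, hw, hwt, hwle⟩ := ih m h2 h1 (by omega) h3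
      exact ⟨w, hw, hwt, by omega⟩

lemma track_pred {u : ℕ} (hu : InTrack E h u) (hu1 : u ≠ 1) :
    ∃ u', InTrack E h u' ∧ IsNext E h u' u := by
  cases hu with
  | base _ => exact absurd rfl hu1
  | step v j hv h1 h2 h3 h4 => exact ⟨v, hv, h1, h2, h3, h4⟩

lemma chain : ∀ u, InTrack E h u → ∀ z, InTrack E h z → z < u →
    ∃ w, IsNext E h z w ∧ InTrack E h w ∧ w ≤ u := by
  intro u
  induction u using Nat.strong_induction_on with
  | _ u ih =>
    intro hu z hz hzu
    obtain ⟨u', hu't, hu'n⟩ := track_pred hu (by have := hz.one_le_s15; omega)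
    rcases lt_trichotomy z u' with hc | hc | hc
    · obtain ⟨w, hw, hwt, hwle⟩ := ih u' hu'n.1 hu't z hz hc
      exact ⟨w, hw, hwt, by have := hu'n.1; omega⟩
    · subst hc
      exact ⟨u, hu'n, hu, le_rfl⟩
    · obtain ⟨w, hw, _, hwle⟩ := ih z hzu hz u' hu't hc
      have := hw.unique hu'n
      omega

end EvacAux

namespace EvacAux
variable {E : ℕ → ℕ → Prop} {h : ℕ}

lemma track_bdd : BddAbove {j | InTrack E h j} := ⟨h, fun _ hj => hj.le_h⟩

lemma track_bdd' {c : ℕ} : BddAbove {j | InTrack E h j ∧ j < c} :=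
  ⟨h, fun _ hj => hj.1.le_h⟩

lemma sSup_pred {z w : ℕ} (hz : InTrack E h z) (hw : IsNext E h z w) :
    sSup {j | InTrack E h j ∧ j < w} = z := by
  have hmem : z ∈ {j | InTrack E h j ∧ j < w} := ⟨hz, hw.1⟩
  have hsup := Nat.sSup_mem ⟨z, hmem⟩ (track_bdd' (E := E) (h := h))
  have hle := le_csSup (track_bdd' (E := E) (h := h)) hmem
  rcases eq_or_lt_of_le hle with he | hlt
  · exact he.symm
  · obtain ⟨w', hw', _, hw'le⟩ := chain _ hsup.1 z hz hlt
    have := hw'.unique hw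
    have := hsup.2
    omega

lemma promoInv_eq_top : promoInv E h h = sSup {j | InTrack E h j} := by
  unfold promoInv; rw [if_pos rfl]

lemma promoInv_eq_of_track {p : ℕ} (hp : p ≠ h) (ht : InTrack E h (p + 1)) :
    promoInv E h p = sSup {j | InTrack E h j ∧ j < p + 1} := by
  unfold promoInv; rw [if_neg hp, if_pos ht]

lemma promoInv_eq_of_not {p : ℕ} (hp : p ≠ h) (ht : ¬ InTrack E h (p + 1)) :
    promoInv E h p = p + 1 := by
  unfold promoInv; rw [if_neg hp, if_neg ht]

lemma pos_exists (hh : 1 ≤ h) {z Q : ℕ} (hz1 : 1 ≤ z) (hzh : z ≤ h) (hzQ : z ≤ Q)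
    (htr : InTrack E h z → ∃ w, IsNext E h z w ∧ w ≤ Q) :
    ∃ m, 1 ≤ m ∧ m < Q ∧ promoInv E h m = z := by
  by_cases hzt : InTrack E h z
  · obtain ⟨w, hw, hwQ⟩ := htr hzt
    have hzw := hw.1
    have hwh := hw.2.1
    refine ⟨w - 1, by omega, by omega, ?_⟩
    have h1 : w - 1 ≠ h := by omega
    have h2 : w - 1 + 1 = w := by omega
    have h3 : InTrack E h (w - 1 + 1) := by
      rw [h2]; exact .step _ _ hzt hw.1 hw.2.1 hw.2.2.1 hw.2.2.2
    rw [promoInv_eq_of_track h1 h3]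
    simp only [h2]
    exact sSup_pred hzt hw
  · have hz2 : 2 ≤ z := by
      by_contra hc
      push_neg at hc
      have hz : z = 1 := by omega
      exact hzt (hz ▸ InTrack.base hh)
    refine ⟨z - 1, by omega, by omega, ?_⟩
    have h1 : z - 1 ≠ h := by omega
    have h2 : z - 1 + 1 = z := by omega
    have h3 : ¬ InTrack E h (z - 1 + 1) := by rw [h2]; exact hzt
    rw [promoInv_eq_of_not h1 h3]
    exact h2

lemma promoInv_bounds (hh : 1 ≤ h) {p : ℕ} (hp1 : 1 ≤ p) (hph : p ≤ h) :
    1 ≤ promoInv E h p ∧ promoInv E h p ≤ h ∧ (p ≠ h → promoInv E h p ≤ p + 1) := by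
  by_cases hp : p = h
  · rw [hp, promoInv_eq_top]
    have hsup := Nat.sSup_mem (⟨1, InTrack.base hh⟩ :
      Set.Nonempty {j | InTrack E h j}) (track_bdd (E := E) (h := h))
    exact ⟨hsup.one_le_s15, hsup.le_h, fun hc => absurd rfl hc⟩
  · by_cases ht : InTrack E h (p + 1)
    · rw [promoInv_eq_of_track hp ht]
      have hsup := Nat.sSup_mem (⟨1, InTrack.base hh, by omega⟩ :
        Set.Nonempty {j | InTrack E h j ∧ j < p + 1}) (track_bdd' (E := E) (h := h))
      have := hsup.1.one_le_s15
      have := hsup.2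
      exact ⟨by omega, by omega, fun _ => by omega⟩
    · rw [promoInv_eq_of_not hp ht]
      omega

lemma promoInv_track_mem (hh : 1 ≤ h) {p : ℕ} (hp1 : 1 ≤ p) (hp : p ≠ h)
    (ht : InTrack E h (p + 1)) :
    InTrack E h (promoInv E h p) ∧ promoInv E h p < p + 1 := by
  rw [promoInv_eq_of_track hp ht]
  have hsup := Nat.sSup_mem (⟨1, InTrack.base hh, by omega⟩ :
    Set.Nonempty {j | InTrack E h j ∧ j < p + 1}) (track_bdd' (E := E) (h := h))
  exact ⟨hsup.1, hsup.2⟩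

lemma inter_trick {A B Z : Finset ℕ} (hs : B ∩ A ⊆ Z ∩ A) : A ∩ B ⊆ Z ∩ B := by
  intro x hx
  rw [Finset.mem_inter] at hx ⊢
  have hx2 := hs (Finset.mem_inter.mpr ⟨hx.2, hx.1⟩)
  rw [Finset.mem_inter] at hx2
  exact ⟨hx2.1, hx.2⟩

lemma descent {k : ℕ} {C : ℕ → Finset ℕ} (hS : IsShellingOn k h C)
    {v : ℕ} (N : ℕ) (hv1 : 1 ≤ v) (hvh : v ≤ h)
    (hNE : ∀ m, v < m → m < N → (C v ∩ C m).card ≠ k - 1) :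
    ∀ a, v < a → a < N → a ≤ h →
      ∃ z, 1 ≤ z ∧ z < v ∧ (C z ∩ C v).card = k - 1 ∧ C a ∩ C v ⊆ C z ∩ C v := by
  intro a
  induction a using Nat.strong_induction_on with
  | _ a ih =>
    intro hva haN hah
    obtain ⟨z1, hz1, hz1a, hcard, hsub⟩ := hS v a hv1 hva hah
    have hsub' : C a ∩ C v ⊆ C z1 ∩ C v := inter_trick hsub
    rcases lt_trichotomy z1 v with h1 | h1 | h1
    · obtain ⟨z2, hz2, hz2v, hc2, hs2⟩ := hS z1 v hz1 h1 hvh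
      exact ⟨z2, hz2, hz2v, hc2, hsub'.trans hs2⟩
    · subst h1
      exact absurd hcard (hNE a hva haN)
    · obtain ⟨z, hz, hzv, hc, hs'⟩ := ih z1 hz1a h1 (by omega) (by omega)
      exact ⟨z, hz, hzv, hc, hsub'.trans hs'⟩

end EvacAux

namespace EvacAux

lemma promo_shelling (k h : ℕ) (C : ℕ → Finset ℕ) (hS : IsShellingOn k h C) :
    IsShellingOn k h (fun m => C (promoInv (dualE k C) h m)) := by
  intro p q hp hpq hqh
  have hq2 : 2 ≤ q := by omega
  have hh1 : 1 ≤ h := by omega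
  have hph : p < h := by omega
  set E := dualE k C with hE
  obtain ⟨ha1, hah, hale⟩ := promoInv_bounds (E := E) hh1 hp (by omega)
  set a := promoInv E h p with ha
  have halep : a ≤ p + 1 := hale (by omega)
  have fin : ∀ b z : ℕ, promoInv E h q = b → 1 ≤ z → z ≤ h → z ≤ q →
      (InTrack E h z → ∃ w, IsNext E h z w ∧ w ≤ q) →
      (C z ∩ C b).card = k - 1 → C a ∩ C b ⊆ C z ∩ C b →
      ∃ z', 1 ≤ z' ∧ z' < q ∧
        ((fun m => C (promoInv E h m)) z' ∩ (fun m => C (promoInv E h m)) q).card = k - 1 ∧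
        (fun m => C (promoInv E h m)) p ∩ (fun m => C (promoInv E h m)) q ⊆
          (fun m => C (promoInv E h m)) z' ∩ (fun m => C (promoInv E h m)) q := by
    intro b z hb hz1 hzh hzq htr hcard hsub
    obtain ⟨m, hm1, hmq, hmz⟩ := pos_exists hh1 hz1 hzh hzq htr
    refine ⟨m, hm1, hmq, ?_, ?_⟩
    · simp only []
      rw [hmz, hb]
      exact hcard
    · simp only []
      rw [hmz, hb, ← ha]
      exact hsub
  rcases eq_or_lt_of_le hqh with hqeq | hqlt
  · -- q = h : the last position receives the last track element
    have hbt : promoInv E h q = sSup {j | InTrack E h j} := by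
      rw [hqeq]; exact promoInv_eq_top
    set v := sSup {j | InTrack E h j} with hv
    have hvt : InTrack E h v :=
      Nat.sSup_mem (⟨1, InTrack.base hh1⟩ : Set.Nonempty {j | InTrack E h j}) track_bdd
    have hv1 : 1 ≤ v := hvt.one_le_s15
    have hvh : v ≤ h := hvt.le_h
    have hNE : ∀ m, v < m → m < h + 1 → (C v ∩ C m).card ≠ k - 1 := by
      intro m h1 h2 hc
      have hEm : E v m := ⟨by omega, hc⟩
      obtain ⟨w, hw, hwt, _⟩ := next_exists hvt m h1 (by omega) hEm
      have : w ≤ v := le_csSup track_bdd hwt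
      have := hw.1
      omega
    have hav : a ≠ v := by
      by_cases hpt : InTrack E h (p + 1)
      · obtain ⟨hat, hap⟩ := promoInv_track_mem hh1 hp (by omega) hpt
        have : p + 1 ≤ v := le_csSup track_bdd hpt
        omega
      · have : a = p + 1 := by rw [ha, promoInv_eq_of_not (by omega) hpt]
        intro hc
        exact hpt (by rw [← this, hc] at hpt ⊢; exact hc ▸ hvt)
    have key : ∃ z, 1 ≤ z ∧ z < v ∧ (C z ∩ C v).card = k - 1 ∧ C a ∩ C v ⊆ C z ∩ C v := by
      rcases lt_or_gt_of_ne hav with hlt | hgt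
      · exact hS a v ha1 hlt hvh
      · exact descent hS (h + 1) hv1 hvh hNE a hgt (by omega) hah
    obtain ⟨z, hz1, hzv, hcard, hsub⟩ := key
    refine fin v z hbt hz1 (by omega) (by omega) ?_ hcard hsub
    intro hzt
    obtain ⟨w, hw, _, hwle⟩ := chain v hvt z hzt hzv
    exact ⟨w, hw, by omega⟩
  · by_cases hqt : InTrack E h (q + 1)
    · -- position q receives the track predecessor of q + 1
      have hbv : promoInv E h q = sSup {j | InTrack E h j ∧ j < q + 1} :=
        promoInv_eq_of_track (by omega) hqt
      set v := sSup {j | InTrack E h j ∧ j < q + 1} with hv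
      have hmem : InTrack E h v ∧ v < q + 1 :=
        Nat.sSup_mem (⟨1, InTrack.base hh1, by omega⟩ :
          Set.Nonempty {j | InTrack E h j ∧ j < q + 1}) track_bdd'
      have hvt := hmem.1
      have hvq : v < q + 1 := hmem.2
      have hv1 : 1 ≤ v := hvt.one_le_s15
      obtain ⟨u, hut, hun⟩ := track_pred hqt (by omega)
      have huv : u ≤ v := le_csSup track_bdd' ⟨hut, hun.1⟩
      have huveq : u = v := by
        rcases eq_or_lt_of_le huv with he | hlt
        · exact he
        · obtain ⟨w, hw, _, hwle⟩ := chain v hvt u hut hlt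
          have := hw.unique hun
          omega
      have hnext : IsNext E h v (q + 1) := huveq ▸ hun
      have hNE : ∀ m, v < m → m < q + 1 → (C v ∩ C m).card ≠ k - 1 := by
        intro m h1 h2 hc
        exact hnext.2.2.2 m h1 h2 ⟨by omega, hc⟩
      have hav : a ≠ v := by
        by_cases hpt : InTrack E h (p + 1)
        · obtain ⟨hat, hap⟩ := promoInv_track_mem hh1 hp (by omega) hpt
          have : p + 1 ≤ v := le_csSup track_bdd' ⟨hpt, by omega⟩
          omega
        · have haeq : a = p + 1 := by rw [ha, promoInv_eq_of_not (by omega) hpt]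
          intro hc
          exact hpt (by rw [← haeq, hc]; exact hvt)
      have key : ∃ z, 1 ≤ z ∧ z < v ∧ (C z ∩ C v).card = k - 1 ∧
          C a ∩ C v ⊆ C z ∩ C v := by
        rcases lt_or_gt_of_ne hav with hlt | hgt
        · exact hS a v ha1 hlt hvt.le_h
        · exact descent hS (q + 1) hv1 hvt.le_h hNE a hgt (by omega) (by omega)
      obtain ⟨z, hz1, hzv, hcard, hsub⟩ := key
      refine fin v z hbv hz1 (by omega) (by omega) ?_ hcard hsub
      intro hzt
      obtain ⟨w, hw, _, hwle⟩ := chain v hvt z hzt hzv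
      exact ⟨w, hw, by omega⟩
    · -- position q receives C (q + 1)
      have hb : promoInv E h q = q + 1 := promoInv_eq_of_not (by omega) hqt
      obtain ⟨z, hz1, hzq1, hcard, hsub⟩ := hS a (q + 1) ha1 (by omega) (by omega)
      refine fin (q + 1) z hb hz1 (by omega) (by omega) ?_ hcard hsub
      intro hzt
      have hEz : E z (q + 1) := ⟨by omega, hcard⟩
      obtain ⟨w, hw, hwt, hwle⟩ := next_exists hzt (q + 1) (by omega) (by omega) hEz
      have hwne : w ≠ q + 1 := fun he => hqt (he ▸ hwt)
      exact ⟨w, hw, by omega⟩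

end EvacAux

namespace EvacAux

lemma partialPromo_shelling (k r h : ℕ) (C : ℕ → Finset ℕ) (hrh : r ≤ h)
    (hS : IsShellingOn k h C) : IsShellingOn k h (partialPromo k r C) := by
  have hSr : IsShellingOn k r C := fun i j h1 h2 h3 => hS i j h1 h2 (h3.trans hrh)
  have hD := promo_shelling k r C hSr
  intro p q hp hpq hqh
  have happ : ∀ m, 1 ≤ m → m ≤ r → partialPromo k r C m = C (promoInv (dualE k C) r m) := by
    intro m h1 h2
    simp only [partialPromo, if_pos (⟨h1, h2⟩ : 1 ≤ m ∧ m ≤ r)]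
  have happ' : ∀ m, ¬ (1 ≤ m ∧ m ≤ r) → partialPromo k r C m = C m := by
    intro m h1
    simp only [partialPromo, if_neg h1]
  by_cases hqr : q ≤ r
  · obtain ⟨z, hz1, hzq, hcard, hsub⟩ := hD p q hp hpq hqr
    refine ⟨z, hz1, hzq, ?_, ?_⟩
    · rw [happ z hz1 (by omega), happ q (by omega) hqr]
      exact hcard
    · rw [happ z hz1 (by omega), happ q (by omega) hqr, happ p hp (by omega)]
      exact hsub
  · push_neg at hqr
    have hq : partialPromo k r C q = C q := happ' q (by omega)
    have hex : ∃ a, 1 ≤ a ∧ a < q ∧ partialPromo k r C p = C a := by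
      by_cases hpr : p ≤ r
      · obtain ⟨ha1, har, _⟩ := promoInv_bounds (E := dualE k C) (le_trans hp hpr) hp hpr
        exact ⟨_, ha1, by omega, happ p hp hpr⟩
      · exact ⟨p, hp, hpq, happ' p (by omega)⟩
    obtain ⟨a, ha1, haq, hpa⟩ := hex
    obtain ⟨z, hz1, hzq, hcard, hsub⟩ := hS a q ha1 haq hqh
    have hzpos : ∃ m, 1 ≤ m ∧ m < q ∧ partialPromo k r C m = C z := by
      by_cases hzr : z ≤ r
      · have hr1 : 1 ≤ r := le_trans hz1 hzr
        by_cases hzs : z = sSup {j | InTrack (dualE k C) r j}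
        · exact ⟨r, hr1, hqr, by rw [happ r hr1 le_rfl, promoInv_eq_top, ← hzs]⟩
        · have hmm : ∃ m, 1 ≤ m ∧ m < r ∧ promoInv (dualE k C) r m = z := by
            apply pos_exists hr1 hz1 hzr hzr
            intro hzt
            have hTt : InTrack (dualE k C) r (sSup {j | InTrack (dualE k C) r j}) :=
              Nat.sSup_mem (⟨1, InTrack.base hr1⟩ :
                Set.Nonempty {j | InTrack (dualE k C) r j}) track_bdd
            have hzT : z < sSup {j | InTrack (dualE k C) r j} :=
              lt_of_le_of_ne (le_csSup track_bdd hzt) hzs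
            obtain ⟨w, hw, _, hwle⟩ := chain _ hTt z hzt hzT
            exact ⟨w, hw, hwle.trans hTt.le_h⟩
          obtain ⟨m, hm1, hmr, hmz⟩ := hmm
          exact ⟨m, hm1, by omega, by rw [happ m hm1 (by omega), hmz]⟩
      · exact ⟨z, hz1, hzq, happ' z (by omega)⟩
    obtain ⟨m, hm1, hmq, hmz⟩ := hzpos
    refine ⟨m, hm1, hmq, ?_, ?_⟩
    · rw [hmz, hq]
      exact hcard
    · rw [hmz, hq, hpa]
      exact hsub

lemma evac_shelling (k h : ℕ) :
    ∀ r, r ≤ h → ∀ C, IsShellingOn k h C → IsShellingOn k h (evacFrom k r C) := by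
  intro r
  induction r using Nat.strong_induction_on with
  | _ r ih =>
    match r with
    | 0 => exact fun _ C hS => hS
    | 1 => exact fun _ C hS => hS
    | r + 2 =>
      intro hrh C hS
      have h1 : IsShellingOn k h (partialPromo k (r + 2) C) :=
        partialPromo_shelling k (r + 2) h C hrh hS
      have h2 := ih (r + 1) (by omega) (by omega) _ h1
      exact h2

end EvacAux

/-- The evacuation of a shelling order is a shelling order. -/
theorem evacuation_of_shelling
    (n k h : ℕ) (C : ℕ → Finset ℕ)
    (hsub : ∀ i, 1 ≤ i → i ≤ h → C i ⊆ Finset.Icc 1 n ∧ (C i).card = k)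
    (hdist : ∀ i j, 1 ≤ i → i < j → j ≤ h → C i ≠ C j)
    (hshell : IsShellingOn k h C) :
    IsShellingOn k h (evacFrom k h C) := by
  exact EvacAux.evac_shelling k h h le_rfl C hshell
end

section
/- Any Bruhat (Gale) interval $[x, y] \subseteq \binom{[n]}{k}$ is a matroid, i.e., satisfies the basis exchange property. -/
/-!
For `k`-sets, `x ≤ y` in the Gale order iff `c_y ≤ c_x` pointwise, where
`c_s t = #{e ∈ s | e < t}` (`Nat.count (· ∈ s) t`); so the interval `[a, b]` is cut out by
`c_b ≤ c_z ≤ c_a`, a condition preserved by anything squeezed pointwise between two of its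
members. Given `a ∈ A \ B`, take `b ∈ B \ A` at the crossing of `c_A` and `c_B` nearest to `a`
(below `a` if `c_A a < c_B a`, above it otherwise). The exchange `A - a + b` changes `c_A` by
`±1` exactly on the stretch between `a` and `b`, where `c_B` lies strictly on that side of
`c_A`, so its counting function stays between `c_A` and `c_B`.
-/

open Finset Nat

theorem Nat.nth_lt_iff_lt_count_of_lt_card {p : ℕ → Prop} [DecidablePred p]
    (hf : (Set.ofPred p).Finite) {k : ℕ} (hk : k < #hf.toFinset) (n : ℕ) :
    nth p k < n ↔ k < count p n := by
  refine ⟨fun h => ?_, nth_lt_of_lt_count⟩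
  calc k < k + 1 := k.lt_succ_self
    _ = count p (nth p k + 1) := (count_nth_succ fun _ => hk).symm
    _ ≤ count p n := count_monotone p h

theorem Nat.exists_last_crossing {P : ℕ → Prop} [DecidablePred P] {hi : ℕ}
    (h0 : ¬P 0) (hhi : P hi) : ∃ s < hi, ¬P s ∧ ∀ t, s < t → t ≤ hi → P t := by
  have hs : ¬P (findGreatest (¬P ·) hi) := findGreatest_spec (P := (¬P ·)) hi.zero_le h0
  refine ⟨_, (findGreatest_le hi).lt_of_ne fun h => hs (h.symm ▸ hhi), hs, fun t hst hti => ?_⟩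
  simpa using findGreatest_is_greatest hst hti

theorem Nat.exists_first_crossing {P : ℕ → Prop} [DecidablePred P] {lo hi : ℕ}
    (hlo : P lo) (hhi : ¬P hi) (hle : lo ≤ hi) :
    ∃ s, lo ≤ s ∧ (∀ t, lo ≤ t → t ≤ s → P t) ∧ ¬P (s + 1) := by
  have hex : ∃ m, lo ≤ m ∧ ¬P m := ⟨hi, hle, hhi⟩
  obtain ⟨hlom, hm⟩ := Nat.find_spec hex
  have hlt : lo < Nat.find hex := hlom.lt_of_ne fun h => hm (h ▸ hlo)
  refine ⟨Nat.find hex - 1, by omega, fun t hlot hts => ?_, by rwa [Nat.sub_add_cancel (by omega)]⟩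
  by_contra hPt
  exact Nat.find_min hex (by omega) ⟨hlot, hPt⟩

theorem sortedL_get_eq_nth (s : Finset ℕ) (i : ℕ) (hi : i < (sortedL s).length) :
    (sortedL s).get ⟨i, hi⟩ = nth (· ∈ s) i := by
  rw [nth_eq_getD_sort (p := (· ∈ s)) s.finite_toSet]
  unfold sortedL at hi ⊢
  simp [List.getElem?_eq_getElem hi]

theorem sortedL_get_lt_iff (s : Finset ℕ) (i : ℕ) (hi : i < (sortedL s).length) (t : ℕ) :
    (sortedL s).get ⟨i, hi⟩ < t ↔ i < count (· ∈ s) t := by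
  rw [sortedL_get_eq_nth, nth_lt_iff_lt_count_of_lt_card (p := (· ∈ s)) s.finite_toSet]
  simpa [sortedL] using hi

theorem count_mem_le_card (s : Finset ℕ) (t : ℕ) : count (· ∈ s) t ≤ #s := by
  rw [count_eq_card_filter_range, filter_mem_eq_inter]
  exact card_le_card inter_subset_right

theorem count_mem_eq_card_of_subset_range {s : Finset ℕ} {n : ℕ} (h : s ⊆ range n) :
    count (· ∈ s) n = #s := by
  rw [count_eq_card_filter_range, filter_mem_eq_inter, inter_eq_right.2 h]

theorem galeLE_iff_count_le {x y : Finset ℕ} (h : #x = #y) :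
    GaleLE x y ↔ ∀ t, count (· ∈ y) t ≤ count (· ∈ x) t := by
  have hlen (s : Finset ℕ) : (sortedL s).length = #s := length_sort _
  constructor
  · intro hxy t
    by_contra! hlt
    have hy : count (· ∈ x) t < (sortedL y).length := hlen y ▸ hlt.trans_le (count_mem_le_card y t)
    have hx : count (· ∈ x) t < (sortedL x).length := by rw [hlen, h]; rwa [← hlen]
    have hyt := (sortedL_get_lt_iff y _ hy t).2 hlt
    exact (lt_irrefl _) ((sortedL_get_lt_iff x _ hx t).1 ((hxy _ hx hy).trans_lt hyt))
  · intro hcount i hx hy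
    rw [← Nat.lt_succ_iff, sortedL_get_lt_iff]
    exact ((sortedL_get_lt_iff y i hy _).1 (Nat.lt_succ_self _)).trans_le (hcount _)

theorem count_mem_insert_erase {A : Finset ℕ} {a b : ℕ} (ha : a ∈ A) (hb : b ∉ A) (t : ℕ) :
    count (· ∈ insert b (A.erase a)) t + (if a < t then 1 else 0)
      = count (· ∈ A) t + (if b < t then 1 else 0) := by
  induction t with
  | zero => simp
  | succ t ih => grind

theorem mem_sdiff_of_count_lt {A B : Finset ℕ} {s : ℕ}
    (h : count (· ∈ B) s + count (· ∈ A) (s + 1) < count (· ∈ A) s + count (· ∈ B) (s + 1)) :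
    s ∈ B \ A := by
  simp only [count_succ] at h
  rw [mem_sdiff]
  split_ifs at h <;> first | omega | tauto

theorem exists_exchange_count_between {A B : Finset ℕ} (hcard : #A = #B) {a : ℕ}
    (ha : a ∈ A \ B) :
    ∃ b ∈ B \ A, ∀ t,
      min (count (· ∈ A) t) (count (· ∈ B) t) ≤ count (· ∈ insert b (A.erase a)) t ∧
        count (· ∈ insert b (A.erase a)) t ≤ max (count (· ∈ A) t) (count (· ∈ B) t) := by
  obtain ⟨haA, haB⟩ := mem_sdiff.1 ha
  by_cases hlt : count (· ∈ A) a < count (· ∈ B) a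
  · obtain ⟨b, hba, hb, hAB⟩ := exists_last_crossing
      (P := fun t => count (· ∈ A) t < count (· ∈ B) t) (by simp) hlt
    have hbBA : b ∈ B \ A := mem_sdiff_of_count_lt (by have := hAB (b + 1) b.lt_succ_self hba; omega)
    refine ⟨b, hbBA, fun t => ?_⟩
    have hexch := count_mem_insert_erase haA (mem_sdiff.1 hbBA).2 t
    by_cases hbt : b < t ∧ t ≤ a
    · have := hAB t hbt.1 hbt.2
      split_ifs at hexch <;> omega
    · split_ifs at hexch <;> omega
  · obtain ⟨n, hn⟩ := exists_nat_subset_range (A ∪ B)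
    have hrange : A ∪ B ⊆ range (n + (a + 1)) := hn.trans (range_mono (Nat.le_add_right _ _))
    have hAn := count_mem_eq_card_of_subset_range (subset_union_left.trans hrange)
    have hBn := count_mem_eq_card_of_subset_range (subset_union_right.trans hrange)
    have hA := count_succ (· ∈ A) a
    have hB := count_succ (· ∈ B) a
    obtain ⟨b, hab, hBA, hb⟩ := exists_first_crossing
      (P := fun t => count (· ∈ B) t < count (· ∈ A) t) (lo := a + 1) (hi := n + (a + 1))
      (by simp only [hA, hB, if_pos haA, if_neg haB]; omega) (by omega) (by omega)
    have hbBA : b ∈ B \ A := mem_sdiff_of_count_lt (by have := hBA b hab le_rfl; omega)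
    refine ⟨b, hbBA, fun t => ?_⟩
    have hexch := count_mem_insert_erase haA (mem_sdiff.1 hbBA).2 t
    by_cases hat : a < t ∧ t ≤ b
    · have := hBA t hat.1 hat.2
      split_ifs at hexch <;> omega
    · split_ifs at hexch <;> omega

theorem interval_is_matroid_general
    (n k : ℕ) (a b : Finset ℕ)
    (hac : a.card = k) (hbc : b.card = k)
    (X : Set (Finset ℕ))
    (hX : ∀ z, z ∈ X ↔ (z ⊆ Finset.Icc 1 n ∧ z.card = k ∧ GaleLE a z ∧ GaleLE z b)) :
    ∀ A ∈ X, ∀ B ∈ X, ∀ a' ∈ A \ B, ∃ b' ∈ B \ A, (A \ {a'}) ∪ {b'} ∈ X := by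
  intro A hA B hB a' ha'
  obtain ⟨hAn, hAk, haA, hAb⟩ := (hX A).1 hA
  obtain ⟨hBn, hBk, haB, hBb⟩ := (hX B).1 hB
  obtain ⟨b', hb', hbetween⟩ := exists_exchange_count_between (hAk.trans hBk.symm) ha'
  have hb'A : b' ∉ A.erase a' := fun h => (mem_sdiff.1 hb').2 (mem_of_mem_erase h)
  have hcard : #(insert b' (A.erase a')) = k := by
    rw [card_insert_of_notMem hb'A, card_erase_add_one (mem_sdiff.1 ha').1, hAk]
  refine ⟨b', hb', ?_⟩
  rw [sdiff_singleton_eq_erase, union_singleton, hX]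
  refine ⟨insert_subset (hBn (mem_sdiff.1 hb').1) ((erase_subset _ _).trans hAn), hcard, ?_, ?_⟩
  · rw [galeLE_iff_count_le (hac.trans hcard.symm)]
    rw [galeLE_iff_count_le (hac.trans hAk.symm)] at haA
    rw [galeLE_iff_count_le (hac.trans hBk.symm)] at haB
    exact fun t => (hbetween t).2.trans (max_le (haA t) (haB t))
  · rw [galeLE_iff_count_le (hcard.trans hbc.symm)]
    rw [galeLE_iff_count_le (hAk.trans hbc.symm)] at hAb
    rw [galeLE_iff_count_le (hBk.trans hbc.symm)] at hBb
    exact fun t => (le_min (hAb t) (hBb t)).trans (hbetween t).1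

/-- Any Gale (Bruhat) interval of `k`-subsets of `[n]` is a matroid: it
satisfies the basis exchange property. -/
theorem interval_is_matroid
    (n k : ℕ) (a b : Finset ℕ)
    (ha : a ⊆ Finset.Icc 1 n) (hb : b ⊆ Finset.Icc 1 n)
    (hac : a.card = k) (hbc : b.card = k)
    (hab : GaleLE a b)
    (X : Set (Finset ℕ))
    (hX : ∀ z, z ∈ X ↔ (z ⊆ Finset.Icc 1 n ∧ z.card = k ∧ GaleLE a z ∧ GaleLE z b)) :
    ∀ A ∈ X, ∀ B ∈ X, ∀ a' ∈ A \ B, ∃ b' ∈ B \ A, (A \ {a'}) ∪ {b'} ∈ X :=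
  interval_is_matroid_general n k a b hac hbc X hX
end
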